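/- arXiv:1712.08628 — 7 statements merged into one kernel-verified Lean document; each statement's English description precedes it below -/
import Mathlib

section
/- Let d be a prime and t ≥ 1. The number of pairs of subspaces counted as prod_{k=0}^{t-2}(d^k + d^n) times d^n equals the sum over ℓ = 1 to t of (t-1 choose ℓ-1)_d * d^{(t-ℓ)(t-ℓ-1)/2} * d^{ℓn}; that is, sum_{ℓ=1}^{t} (t-1 choose ℓ-1)_d d^{(t-ℓ)(t-ℓ-1)/2} d^{ℓ n} = d^n prod_{k=0}^{t-2}(d^k + d^n). -/
open Finset

/-- The Gaussian (q-)binomial coefficient with base `d`, defined via the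
standard Pascal-type recursion. -/
def gaussBinom (d : ℕ) : ℕ → ℕ → ℕ
  | _, 0 => 1
  | 0, _ + 1 => 0
  | n + 1, k + 1 => d ^ (k + 1) * gaussBinom d n (k + 1) + gaussBinom d n k

lemma tri (a : ℕ) : a * (a - 1) / 2 + a = (a + 1) * a / 2 := by
  cases a with
  | zero => rfl
  | succ b =>
    obtain ⟨c, hc⟩ := Nat.even_mul_succ_self b
    have h2 : (b + 1 + 1) * (b + 1) = b * (b + 1) + 2 * (b + 1) := by ring
    simp only [Nat.add_sub_cancel]
    have h3 : (b + 1) * b = b * (b + 1) := Nat.mul_comm _ _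
    omega

lemma gaussBinom_eq_zero (d : ℕ) : ∀ m k, m < k → gaussBinom d m k = 0 := by
  intro m
  induction m with
  | zero =>
    intro k hk
    match k, hk with
    | k + 1, _ => rfl
  | succ m ih =>
    intro k hk
    match k, hk with
    | k + 1, hk =>
      show d ^ (k + 1) * gaussBinom d m (k + 1) + gaussBinom d m k = 0
      rw [ih (k + 1) (by omega), ih k (by omega)]
      ring

lemma key (d : ℕ) : ∀ m x : ℕ,
    ∑ j ∈ Finset.range (m + 1),
      gaussBinom d m j * d ^ ((m - j) * (m - j - 1) / 2) * x ^ j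
    = ∏ k ∈ Finset.range m, (d ^ k + x) := by
  intro m
  induction m with
  | zero => intro x; simp [gaussBinom]
  | succ m ih =>
    intro x
    have hz : gaussBinom d m (m + 1) = 0 := gaussBinom_eq_zero d m (m + 1) (by omega)
    rw [Finset.prod_range_succ, ← ih x, mul_add, Finset.sum_mul, Finset.sum_mul]
    have hext : (∑ j ∈ Finset.range (m + 1),
          gaussBinom d m j * d ^ ((m - j) * (m - j - 1) / 2) * x ^ j * d ^ m)
        = ∑ j ∈ Finset.range (m + 2),
          gaussBinom d m j * d ^ ((m - j) * (m - j - 1) / 2) * x ^ j * d ^ m := by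
      conv_rhs => rw [Finset.sum_range_succ]
      rw [hz]
      ring
    rw [hext,
      Finset.sum_range_succ'
        (fun j => gaussBinom d m j * d ^ ((m - j) * (m - j - 1) / 2) * x ^ j * d ^ m) (m + 1),
      Finset.sum_range_succ'
        (fun j => gaussBinom d (m+1) j * d ^ ((m + 1 - j) * (m + 1 - j - 1) / 2) * x ^ j) (m+1)]
    rw [add_right_comm, ← Finset.sum_add_distrib]
    congr 1
    · apply Finset.sum_congr rfl
      intro i hi
      simp only [Finset.mem_range] at hi
      have hi' : i ≤ m := by omega
      show gaussBinom d (m + 1) (i + 1) * d ^ ((m + 1 - (i + 1)) * (m + 1 - (i + 1) - 1) / 2) * x ^ (i + 1)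
        = gaussBinom d m (i + 1) * d ^ ((m - (i + 1)) * (m - (i + 1) - 1) / 2) * x ^ (i + 1) * d ^ m
          + gaussBinom d m i * d ^ ((m - i) * (m - i - 1) / 2) * x ^ i * x
      have hrec : gaussBinom d (m + 1) (i + 1)
          = d ^ (i + 1) * gaussBinom d m (i + 1) + gaussBinom d m i := rfl
      rw [hrec]
      have hsub : m + 1 - (i + 1) = m - i := by omega
      rw [hsub]
      rcases Nat.lt_or_ge i m with h | h
      · -- i < m
        set a := m - i - 1 with ha
        have h1 : m - i = a + 1 := by omega
        have h2 : m - (i + 1) = a := by omega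
        rw [h1, h2]
        have hexp : (i + 1) + (a + 1) * a / 2 = a * (a - 1) / 2 + m := by
          have := tri a
          omega
        have key2 : d ^ (i + 1) * d ^ ((a + 1) * a / 2) = d ^ (a * (a - 1) / 2) * d ^ m := by
          rw [← pow_add, ← pow_add, hexp]
        rw [show (d ^ (i + 1) * gaussBinom d m (i + 1) + gaussBinom d m i) *
              d ^ ((a + 1) * a / 2) * x ^ (i + 1)
            = gaussBinom d m (i + 1) * (d ^ (i + 1) * d ^ ((a + 1) * a / 2)) * x ^ (i + 1)
              + gaussBinom d m i * d ^ ((a + 1) * a / 2) * x ^ i * x from by ring, key2]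
        ring
      · -- i = m
        have him : i = m := by omega
        subst him
        rw [gaussBinom_eq_zero d i (i + 1) (by omega)]
        simp
        ring
    · -- constant terms
      show gaussBinom d (m + 1) 0 * d ^ ((m + 1 - 0) * (m + 1 - 0 - 1) / 2) * x ^ 0
        = gaussBinom d m 0 * d ^ ((m - 0) * (m - 0 - 1) / 2) * x ^ 0 * d ^ m
      have h0 : ∀ r, gaussBinom d r 0 = 1 := fun r => by cases r <;> rfl
      rw [h0, h0]
      simp only [Nat.sub_zero, Nat.add_sub_cancel, one_mul, pow_zero, mul_one]
      rw [← pow_add]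
      congr 1
      have := tri m
      omega

/-- Normalization constant identity for the `t`-th moment of random stabilizer states:
`∑_{ℓ=1}^{t} (t-1 choose ℓ-1)_d d^{(t-ℓ)(t-ℓ-1)/2} d^{ℓn} = d^n ∏_{k=0}^{t-2} (d^k + d^n)`. -/
theorem stmt4 (d t n : ℕ) (hd : d.Prime) (ht : 1 ≤ t) :
    ∑ ℓ ∈ Finset.Icc 1 t,
        gaussBinom d (t - 1) (ℓ - 1) * d ^ ((t - ℓ) * (t - ℓ - 1) / 2) * d ^ (ℓ * n) =
      d ^ n * ∏ k ∈ Finset.range (t - 1), (d ^ k + d ^ n) := by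
  obtain ⟨m, rfl⟩ : ∃ m, t = m + 1 := ⟨t - 1, by omega⟩
  simp only [Nat.add_sub_cancel]
  have hre : ∑ ℓ ∈ Finset.Icc 1 (m + 1),
      gaussBinom d m (ℓ - 1) * d ^ ((m + 1 - ℓ) * (m + 1 - ℓ - 1) / 2) * d ^ (ℓ * n)
      = ∑ j ∈ Finset.range (m + 1),
        gaussBinom d m j * d ^ ((m - j) * (m - j - 1) / 2) * d ^ ((j + 1) * n) := by
    rw [← Finset.Ico_add_one_right_eq_Icc, Finset.sum_Ico_eq_sum_range]
    apply Finset.sum_congr (by congr 1 <;> omega)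
    intro j _
    have h1 : m + 1 - (1 + j) = m - j := by omega
    have h2 : 1 + j = j + 1 := by omega
    simp [h1, h2]
  rw [hre, ← key d m (d ^ n), Finset.mul_sum]
  apply Finset.sum_congr rfl
  intro j _
  rw [← pow_mul]
  have hjn : (j + 1) * n = n + n * j := by ring
  rw [hjn, pow_add]
  ring
end

section
/- Let d be an odd prime and let ψ be a pure quantum state on (C^d)^{⊗n} whose Wigner function satisfies w_ψ(x) ≥ 0 for all phase space points x. Then ψ is a stabilizer state. -/
open scoped BigOperators ComplexConjugate
open Finset Matrix

noncomputable section

/-- The primitive `d`-th root of unity `ω = e^{2πi/d}`. -/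
def omg (d : ℕ) : ℂ := Complex.exp (2 * Real.pi * Complex.I / d)

/-- The phase `τ = (-1)^d e^{iπ/d} = e^{iπ(d²+1)/d}`, with `τ² = ω`. -/
def tau (d : ℕ) : ℂ := Complex.exp (Real.pi * Complex.I * (d ^ 2 + 1) / d)

/-- `ω^k` for `k : ZMod d` (well-defined since `ω^d = 1`). -/
def omgPow (d : ℕ) [NeZero d] (k : ZMod d) : ℂ := omg d ^ k.val

/-- Integer dot product of phase-space component vectors, via canonical representatives. -/
def dotv {d n : ℕ} [NeZero d] (p q : Fin n → ZMod d) : ℕ :=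
  ∑ i, (p i).val * (q i).val

/-- The standard symplectic form `[(p,q),(p',q')] = p·q' - q·p'` on `(ZMod d)^{2n}`. -/
def symp {d n : ℕ} [NeZero d] (x y : (Fin n → ZMod d) × (Fin n → ZMod d)) : ZMod d :=
  ∑ i, (x.1 i * y.2 i - x.2 i * y.1 i)

/-- The Weyl operator `W_{p,q} = τ^{-p·q} Z^p X^q` on `(ℂ^d)^{⊗n}`, with matrix
entries `⟨a|W_{p,q}|b⟩ = τ^{-p·q} ω^{p·a} δ_{a,b+q}`. -/
def Weyl (d n : ℕ) [NeZero d] (x : (Fin n → ZMod d) × (Fin n → ZMod d)) :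
    Matrix (Fin n → ZMod d) (Fin n → ZMod d) ℂ :=
  Matrix.of fun a b =>
    tau d ^ (-(dotv x.1 x.2 : ℤ)) * omg d ^ dotv x.1 a * (if a = b + x.2 then 1 else 0)

/-- The rank-one projector `|ψ⟩⟨ψ|` associated to a vector `ψ`. -/
def outer (d n : ℕ) [NeZero d] (ψ : (Fin n → ZMod d) → ℂ) :
    Matrix (Fin n → ZMod d) (Fin n → ZMod d) ℂ :=
  Matrix.of fun a b => ψ a * conj (ψ b)

/-- The standard inner product `⟨φ, ψ⟩ = ∑ conj(φ a) ψ a`. -/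
def dotc {d n : ℕ} [NeZero d] (φ ψ : (Fin n → ZMod d) → ℂ) : ℂ :=
  ∑ a, conj (φ a) * ψ a

/-- `ψ` is a pure stabilizer state: it is a unit vector which is a simultaneous
eigenvector of the Weyl operators `W_x` for `x` ranging over a Lagrangian
(maximal totally isotropic, cardinality `d^n`) subspace of phase space. -/
def IsStabilizerState (d n : ℕ) [NeZero d] (ψ : (Fin n → ZMod d) → ℂ) : Prop :=
  dotc ψ ψ = 1 ∧
  ∃ M : Submodule (ZMod d) ((Fin n → ZMod d) × (Fin n → ZMod d)),
    (∀ x ∈ M, ∀ y ∈ M, symp x y = 0) ∧ Nat.card M = d ^ n ∧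
    ∀ x ∈ M, ∃ c : ℂ, (Weyl d n x).mulVec ψ = c • ψ

/-- The phase-space point operator `A_x = d^{-n} ∑_y ω^{-[x,y]} W_y†`. -/
def PhasePoint (d n : ℕ) [NeZero d] (x : (Fin n → ZMod d) × (Fin n → ZMod d)) :
    Matrix (Fin n → ZMod d) (Fin n → ZMod d) ℂ :=
  ((d : ℂ) ^ n)⁻¹ • (∑ y : ((Fin n → ZMod d) × (Fin n → ZMod d)),
    omgPow d (-(symp x y)) • (Weyl d n y)ᴴ)

/-- The characteristic distribution `p_ψ(x) = d^{-n} |tr(W_x |ψ⟩⟨ψ|)|²`. -/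
def pdist (d n : ℕ) [NeZero d] (ψ : (Fin n → ZMod d) → ℂ)
    (x : (Fin n → ZMod d) × (Fin n → ZMod d)) : ℝ :=
  ((d : ℝ) ^ n)⁻¹ * ‖(Weyl d n x * outer d n ψ).trace‖ ^ 2

/-- The Wigner function `w_ψ(x) = d^{-n} tr(A_x |ψ⟩⟨ψ|)` (real part). -/
def wigner (d n : ℕ) [NeZero d] (ψ : (Fin n → ZMod d) → ℂ)
    (x : (Fin n → ZMod d) × (Fin n → ZMod d)) : ℝ :=
  ((d : ℝ) ^ n)⁻¹ * ((PhasePoint d n x * outer d n ψ).trace).re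

end
noncomputable section
set_option linter.unusedSectionVars false
set_option maxHeartbeats 1000000

namespace Hudson

variable (d : ℕ) [NeZero d]

lemma omg_prim : IsPrimitiveRoot (omg d) d :=
  Complex.isPrimitiveRoot_exp d (NeZero.ne d)

lemma omg_pow_d : omg d ^ d = 1 := (omg_prim d).pow_eq_one

lemma omg_ne_zero : omg d ≠ 0 := Complex.exp_ne_zero _

lemma abs_omg : ‖omg d‖ = 1 := by
  have : (2 * (Real.pi : ℂ) * Complex.I / d) = ((2 * Real.pi / d : ℝ) : ℂ) * Complex.I := by
    push_cast; ring
  rw [omg, this, Complex.norm_exp_ofReal_mul_I]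

lemma omg_pow_mod (m : ℕ) : omg d ^ (m % d) = omg d ^ m := by
  conv_rhs => rw [Nat.div_add_mod m d |>.symm]
  rw [pow_add, pow_mul, omg_pow_d, one_pow, one_mul]

variable {d}

/-- `ζ` notation for omgPow. -/
local notation "ζ" => omgPow d

lemma zeta_zero : ζ (0 : ZMod d) = 1 := by
  simp [omgPow, ZMod.val_zero]

lemma zeta_add (a b : ZMod d) : ζ (a + b) = ζ a * ζ b := by
  rw [omgPow, omgPow, omgPow, ← pow_add, ZMod.val_add, omg_pow_mod]

lemma zeta_natCast (m : ℕ) : ζ ((m : ZMod d)) = omg d ^ m := by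
  rw [omgPow, ZMod.val_natCast, omg_pow_mod]

lemma zeta_ne_zero (a : ZMod d) : ζ a ≠ 0 := pow_ne_zero _ (omg_ne_zero d)

lemma zeta_mul_neg (a : ZMod d) : ζ a * ζ (-a) = 1 := by
  rw [← zeta_add, add_neg_cancel, zeta_zero]

lemma abs_zeta (a : ZMod d) : ‖ζ a‖ = 1 := by
  rw [omgPow, norm_pow, abs_omg, one_pow]

lemma conj_zeta (a : ZMod d) : conj (ζ a) = ζ (-a) := by
  have h1 : conj (ζ a) * ζ a = 1 := by
    rw [Complex.conj_mul']
    norm_cast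
    rw [abs_zeta]; norm_num
  calc conj (ζ a) = conj (ζ a) * (ζ a * ζ (-a)) := by rw [zeta_mul_neg]; ring
    _ = (conj (ζ a) * ζ a) * ζ (-a) := by ring
    _ = ζ (-a) := by rw [h1, one_mul]

lemma zeta_eq_one_iff (a : ZMod d) : ζ a = 1 ↔ a = 0 := by
  constructor
  · intro h
    rw [omgPow, (omg_prim d).pow_eq_one_iff_dvd] at h
    have hlt := ZMod.val_lt a
    have h0 : a.val = 0 := Nat.eq_zero_of_dvd_of_lt h hlt
    exact (ZMod.val_eq_zero a).mp h0
  · rintro rfl; exact zeta_zero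

end Hudson
namespace Hudson2
open Hudson

variable (d : ℕ) [NeZero d]

lemma tau_sq (hd : d ≠ 0) : tau d ^ 2 = omg d := by
  have hdc : (d : ℂ) ≠ 0 := Nat.cast_ne_zero.mpr hd
  rw [tau, omg, ← Complex.exp_nat_mul]
  rw [show (2 : ℕ) * (Real.pi * Complex.I * ((d : ℂ) ^ 2 + 1) / d)
      = (d : ℂ) * (2 * Real.pi * Complex.I) + 2 * Real.pi * Complex.I / d by
    field_simp; ring]
  rw [Complex.exp_add]
  rw [show (d : ℂ) * (2 * Real.pi * Complex.I) = (d : ℕ) * (2 * Real.pi * Complex.I) by norm_num]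
  rw [Complex.exp_nat_mul, Complex.exp_two_pi_mul_I, one_pow, one_mul]

lemma tau_pow_d (hodd : Odd d) : tau d ^ d = 1 := by
  have hd : d ≠ 0 := by rintro rfl; simp at hodd
  have hdc : (d : ℂ) ≠ 0 := Nat.cast_ne_zero.mpr hd
  rw [tau, ← Complex.exp_nat_mul]
  rw [show (d : ℕ) * (Real.pi * Complex.I * ((d : ℂ) ^ 2 + 1) / d)
      = ((d ^ 2 + 1 : ℕ) : ℂ) * (Real.pi * Complex.I) by push_cast; field_simp]
  rw [Complex.exp_nat_mul, Complex.exp_pi_mul_I]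
  have : Even (d ^ 2 + 1) := by
    have : Odd (d ^ 2) := hodd.pow
    exact this.add_one
  exact this.neg_one_pow

lemma tau_eq (hodd : Odd d) : tau d = omg d ^ ((d + 1) / 2) := by
  have hd : d ≠ 0 := by rintro rfl; simp at hodd
  have h2 : 2 * ((d + 1) / 2) = d + 1 := by
    obtain ⟨k, hk⟩ := hodd; omega
  calc tau d = tau d ^ (d + 1) := by rw [pow_succ, tau_pow_d d hodd, one_mul]
    _ = (tau d ^ 2) ^ ((d + 1) / 2) := by rw [← pow_mul, h2]
    _ = omg d ^ ((d + 1) / 2) := by rw [tau_sq d hd]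

end Hudson2

end
noncomputable section
set_option linter.unusedSectionVars false
set_option maxHeartbeats 1000000

namespace Hudson3
open Hudson Hudson2

variable {d n : ℕ} [NeZero d]

local notation "ζ" => omgPow d

def hz (d : ℕ) : ZMod d := (((d + 1) / 2 : ℕ) : ZMod d)

lemma two_mul_hz (hodd : Odd d) : 2 * hz d = 1 := by
  have h2 : 2 * ((d + 1) / 2) = d + 1 := by obtain ⟨k, hk⟩ := hodd; omega
  have : ((2 * ((d + 1) / 2) : ℕ) : ZMod d) = ((d + 1 : ℕ) : ZMod d) := by rw [h2]
  push_cast at this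
  simpa [ZMod.natCast_self, hz] using this

def dz (p q : Fin n → ZMod d) : ZMod d := ∑ i, p i * q i

lemma dotv_cast (p q : Fin n → ZMod d) : ((dotv p q : ℕ) : ZMod d) = dz p q := by
  simp [dotv, dz, Nat.cast_sum, Nat.cast_mul, ZMod.natCast_val, ZMod.cast_id]

lemma zeta_inv (a : ZMod d) : (ζ a)⁻¹ = ζ (-a) := by
  field_simp [zeta_ne_zero]
  exact (zeta_mul_neg a).symm

lemma weyl_apply (hodd : Odd d) (x : (Fin n → ZMod d) × (Fin n → ZMod d))
    (a b : Fin n → ZMod d) :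
    Weyl d n x a b = if a = b + x.2 then ζ (dz x.1 a - hz d * dz x.1 x.2) else 0 := by
  have key : tau d ^ (-(dotv x.1 x.2 : ℤ)) * omg d ^ dotv x.1 a
      = ζ (dz x.1 a - hz d * dz x.1 x.2) := by
    rw [_root_.zpow_neg, zpow_natCast, tau_eq d hodd, ← pow_mul, ← zeta_natCast, ← zeta_natCast,
      zeta_inv, ← zeta_add]
    congr 1
    push_cast [dotv_cast, hz]
    ring
  rw [Weyl, Matrix.of_apply, key]
  by_cases h : a = b + x.2 <;> simp [h]

lemma sum_zeta_eq_zero {A : Type*} [AddCommGroup A] [Fintype A] (f : A → ZMod d)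
    (hf : ∀ a b, f (a + b) = f a + f b) (a₀ : A) (h : f a₀ ≠ 0) :
    ∑ a, ζ (f a) = 0 := by
  have hS : ∑ a, ζ (f a) = ∑ a, ζ (f (a + a₀)) :=
    (Fintype.sum_equiv (Equiv.addRight a₀) _ _ (fun a => rfl)).symm
  have h2 : ∑ a, ζ (f (a + a₀)) = (∑ a, ζ (f a)) * ζ (f a₀) := by
    rw [Finset.sum_mul]
    exact Finset.sum_congr rfl fun a _ => by rw [hf, zeta_add]
  have h1 : (∑ a, ζ (f a)) * (1 - ζ (f a₀)) = 0 := by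
    rw [mul_sub, mul_one, ← h2, ← hS, sub_self]
  rcases mul_eq_zero.mp h1 with h2 | h2
  · exact h2
  · exfalso
    apply h
    rw [← zeta_eq_one_iff]
    linear_combination -h2

lemma dz_add_right (p q r : Fin n → ZMod d) : dz p (q + r) = dz p q + dz p r := by
  simp [dz, mul_add, Finset.sum_add_distrib]

lemma dz_add_left (p q r : Fin n → ZMod d) : dz (p + q) r = dz p r + dz q r := by
  simp [dz, add_mul, Finset.sum_add_distrib]

lemma dz_comm (p q : Fin n → ZMod d) : dz p q = dz q p := by
  simp [dz, mul_comm]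

lemma dz_zero_left (q : Fin n → ZMod d) : dz 0 q = 0 := by simp [dz]

lemma dz_zero_right (q : Fin n → ZMod d) : dz q 0 = 0 := by simp [dz]

lemma dz_neg_right (p q : Fin n → ZMod d) : dz p (-q) = -dz p q := by
  simp [dz, Finset.sum_neg_distrib]

lemma dz_sub_right (p q r : Fin n → ZMod d) : dz p (q - r) = dz p q - dz p r := by
  rw [sub_eq_add_neg, dz_add_right, dz_neg_right]; ring

lemma sum_zeta_dz (p : Fin n → ZMod d) (hp : p ≠ 0) :
    ∑ a : Fin n → ZMod d, ζ (dz p a) = 0 := by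
  obtain ⟨i, hi⟩ : ∃ i, p i ≠ 0 := by
    by_contra h; push_neg at h; exact hp (funext h)
  refine sum_zeta_eq_zero _ (fun a b => dz_add_right p a b) (Pi.single i 1) ?_
  rw [dz, Finset.sum_eq_single i]
  · simpa using hi
  · intro j _ hj; simp [Pi.single_eq_of_ne hj]
  · intro h; exact absurd (Finset.mem_univ i) h

lemma card_V : Fintype.card (Fin n → ZMod d) = d ^ n := by
  simp [ZMod.card]

lemma sum_zeta_dz_ite (p : Fin n → ZMod d) :
    ∑ a : Fin n → ZMod d, ζ (dz p a) = if p = 0 then (d : ℂ) ^ n else 0 := by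
  by_cases hp : p = 0
  · subst hp
    simp only [if_pos rfl, dz_zero_left, zeta_zero, Finset.sum_const, Finset.card_univ,
      card_V, nsmul_eq_mul, mul_one]
    push_cast; ring
  · rw [if_neg hp]; exact sum_zeta_dz p hp

lemma symp_add_right (x y z : (Fin n → ZMod d) × (Fin n → ZMod d)) :
    symp x (y + z) = symp x y + symp x z := by
  rw [symp, symp, symp, ← Finset.sum_add_distrib]
  apply Finset.sum_congr rfl; intro i _
  show x.1 i * (y.2 i + z.2 i) - x.2 i * (y.1 i + z.1 i) = _
  ring

lemma symp_add_left (x y z : (Fin n → ZMod d) × (Fin n → ZMod d)) :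
    symp (x + y) z = symp x z + symp y z := by
  rw [symp, symp, symp, ← Finset.sum_add_distrib]
  apply Finset.sum_congr rfl; intro i _
  show (x.1 i + y.1 i) * z.2 i - (x.2 i + y.2 i) * z.1 i = _
  ring

lemma symp_neg_right (x y : (Fin n → ZMod d) × (Fin n → ZMod d)) :
    symp x (-y) = -symp x y := by
  rw [symp, symp, ← Finset.sum_neg_distrib]
  apply Finset.sum_congr rfl; intro i _
  show x.1 i * (-(y.2 i)) - x.2 i * (-(y.1 i)) = _
  ring

lemma symp_antisymm (x y : (Fin n → ZMod d) × (Fin n → ZMod d)) :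
    symp x y = -symp y x := by
  rw [symp, symp, ← Finset.sum_neg_distrib]
  apply Finset.sum_congr rfl; intro i _
  ring

lemma symp_zero_right (x : (Fin n → ZMod d) × (Fin n → ZMod d)) : symp x 0 = 0 := by
  rw [symp]
  apply Finset.sum_eq_zero; intro i _
  show x.1 i * 0 - x.2 i * 0 = 0
  ring

lemma symp_zero_left (x : (Fin n → ZMod d) × (Fin n → ZMod d)) : symp 0 x = 0 := by
  rw [symp_antisymm, symp_zero_right, neg_zero]

lemma symp_smul_right (c : ZMod d) (x y : (Fin n → ZMod d) × (Fin n → ZMod d)) :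
    symp x (c • y) = c * symp x y := by
  rw [symp, symp, Finset.mul_sum]
  apply Finset.sum_congr rfl; intro i _
  show x.1 i * (c * y.2 i) - x.2 i * (c * y.1 i) = _
  ring

lemma symp_smul_left (c : ZMod d) (x y : (Fin n → ZMod d) × (Fin n → ZMod d)) :
    symp (c • x) y = c * symp x y := by
  rw [symp_antisymm, symp_smul_right, symp_antisymm y x]; ring

lemma symp_exists_ne (x : (Fin n → ZMod d) × (Fin n → ZMod d)) (hx : x ≠ 0) :
    ∃ y, symp x y ≠ 0 := by
  by_cases h1 : x.1 = 0
  · have h2 : x.2 ≠ 0 := fun h2 => hx (Prod.ext h1 h2)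
    obtain ⟨i, hi⟩ : ∃ i, x.2 i ≠ 0 := by
      by_contra h; push_neg at h; exact h2 (funext h)
    refine ⟨(Pi.single i 1, 0), ?_⟩
    have : symp x (Pi.single i 1, 0) = -x.2 i := by
      rw [symp, Finset.sum_eq_single i]
      · simp
      · intro j _ hj
        simp [Pi.single_eq_of_ne hj]
      · intro h; exact absurd (Finset.mem_univ i) h
    rw [this]
    exact neg_ne_zero.mpr hi
  · obtain ⟨i, hi⟩ : ∃ i, x.1 i ≠ 0 := by
      by_contra h; push_neg at h; exact h1 (funext h)
    refine ⟨(0, Pi.single i 1), ?_⟩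
    have : symp x (0, Pi.single i 1) = x.1 i := by
      rw [symp, Finset.sum_eq_single i]
      · simp
      · intro j _ hj
        simp [Pi.single_eq_of_ne hj]
      · intro h; exact absurd (Finset.mem_univ i) h
    rw [this]
    exact hi

lemma card_G : Fintype.card ((Fin n → ZMod d) × (Fin n → ZMod d)) = d ^ n * d ^ n := by
  simp [Fintype.card_prod, card_V]

lemma sum_zeta_symp_right (x : (Fin n → ZMod d) × (Fin n → ZMod d)) :
    ∑ y : (Fin n → ZMod d) × (Fin n → ZMod d), ζ (symp x y)
      = if x = 0 then (d : ℂ) ^ n * (d : ℂ) ^ n else 0 := by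
  by_cases hx : x = 0
  · subst hx
    simp only [if_pos rfl, symp_zero_left, zeta_zero, Finset.sum_const, Finset.card_univ,
      card_G, nsmul_eq_mul, mul_one]
    push_cast; ring
  · rw [if_neg hx]
    obtain ⟨y₀, hy₀⟩ := symp_exists_ne x hx
    exact sum_zeta_eq_zero _ (fun a b => symp_add_right x a b) y₀ hy₀

lemma sum_zeta_symp_left (x : (Fin n → ZMod d) × (Fin n → ZMod d)) :
    ∑ y : (Fin n → ZMod d) × (Fin n → ZMod d), ζ (symp y x)
      = if x = 0 then (d : ℂ) ^ n * (d : ℂ) ^ n else 0 := by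
  by_cases hx : x = 0
  · subst hx
    simp only [if_pos rfl, symp_zero_right, zeta_zero, Finset.sum_const, Finset.card_univ,
      card_G, nsmul_eq_mul, mul_one]
    push_cast; ring
  · rw [if_neg hx]
    obtain ⟨y₀, hy₀⟩ := symp_exists_ne x hx
    refine sum_zeta_eq_zero _ (fun a b => symp_add_left a b x) (-y₀) ?_
    have heq : symp (-y₀) x = symp x y₀ := by
      rw [symp_antisymm, symp_neg_right, neg_neg]
    rw [heq]; exact hy₀

end Hudson3
end
noncomputable section
set_option linter.unusedSectionVars false
set_option maxHeartbeats 1000000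

namespace Hudson4
open Hudson Hudson2 Hudson3

variable {d n : ℕ} [NeZero d]

local notation "ζ" => omgPow d

lemma symp_eq_dz (x y : (Fin n → ZMod d) × (Fin n → ZMod d)) :
    symp x y = dz x.1 y.2 - dz x.2 y.1 := by
  rw [symp, dz, dz, ← Finset.sum_sub_distrib]

lemma dz_neg_left (p q : Fin n → ZMod d) : dz (-p) q = -dz p q := by
  rw [dz_comm, dz_neg_right, dz_comm]

lemma weyl_zero : Weyl d n 0 = (1 : Matrix (Fin n → ZMod d) (Fin n → ZMod d) ℂ) := by
  ext a b
  rw [Weyl, Matrix.of_apply]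
  have h1 : dotv (0 : (Fin n → ZMod d) × (Fin n → ZMod d)).1 (0 : (Fin n → ZMod d) × (Fin n → ZMod d)).2 = 0 := by
    simp [dotv]
  have h2 : dotv (0 : (Fin n → ZMod d) × (Fin n → ZMod d)).1 a = 0 := by
    simp [dotv]
  rw [h1, h2]
  simp [Matrix.one_apply, eq_comm]

lemma weyl_mul (hodd : Odd d) (x y : (Fin n → ZMod d) × (Fin n → ZMod d)) :
    Weyl d n x * Weyl d n y = ζ (hz d * symp x y) • Weyl d n (x + y) := by
  have h2 := two_mul_hz (d := d) hodd
  ext a c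
  rw [Matrix.mul_apply, Matrix.smul_apply]
  have hsum : ∑ b, Weyl d n x a b * Weyl d n y b c
      = (if a = (c + y.2) + x.2 then ζ (dz x.1 a - hz d * dz x.1 x.2) else 0) *
        ζ (dz y.1 (c + y.2) - hz d * dz y.1 y.2) := by
    rw [Finset.sum_eq_single (c + y.2)]
    · rw [weyl_apply hodd, weyl_apply hodd, if_pos rfl]
    · intro b _ hb
      rw [weyl_apply hodd y, if_neg hb, mul_zero]
    · intro h; exact absurd (Finset.mem_univ _) h
  rw [hsum, weyl_apply hodd]
  have hcond : (a = (c + y.2) + x.2) ↔ (a = c + (x + y).2) := by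
    constructor <;> intro h <;> rw [h] <;>
      show _ = _ <;> rw [add_assoc, add_comm y.2 x.2] <;> rfl
  by_cases h : a = (c + y.2) + x.2
  · rw [if_pos h, if_pos (hcond.mp h)]
    rw [smul_eq_mul, ← zeta_add, ← zeta_add]
    congr 1
    subst h
    have e1 : (x + y).1 = x.1 + y.1 := rfl
    have e2 : (x + y).2 = x.2 + y.2 := rfl
    rw [symp_eq_dz, e1, e2]
    simp only [dz_add_right, dz_add_left]
    linear_combination (dz x.2 y.1) * h2 + (hz d - 1) * dz_comm y.1 x.2
  · rw [if_neg h, if_neg (fun hc => h (hcond.mpr hc)), zero_mul, smul_eq_mul, mul_zero]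

lemma weyl_conjTranspose (hodd : Odd d) (x : (Fin n → ZMod d) × (Fin n → ZMod d)) :
    (Weyl d n x)ᴴ = Weyl d n (-x) := by
  ext a b
  rw [Matrix.conjTranspose_apply, weyl_apply hodd, weyl_apply hodd]
  have e1 : (-x).1 = -x.1 := rfl
  have e2 : (-x).2 = -x.2 := rfl
  have hcond : (b = a + x.2) ↔ (a = b + (-x).2) := by
    rw [e2]
    constructor <;> intro h <;> rw [h] <;> abel
  by_cases h : b = a + x.2
  · rw [if_pos h, if_pos (hcond.mp h), ← starRingEnd_apply, conj_zeta]
    congr 1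
    subst h
    rw [e1, e2]
    simp only [dz_neg_left, dz_neg_right, dz_add_right]
    linear_combination (dz x.1 x.2) * (two_mul_hz (d := d) hodd)
  · rw [if_neg h, if_neg (fun hc => h (hcond.mpr hc)), star_zero]

lemma weyl_trace (hodd : Odd d) (x : (Fin n → ZMod d) × (Fin n → ZMod d)) :
    (Weyl d n x).trace = if x = 0 then (d : ℂ) ^ n else 0 := by
  rw [Matrix.trace]
  by_cases h2 : x.2 = 0
  · have hx0 : (x = 0) ↔ (x.1 = 0) := by
      constructor
      · rintro rfl; rfl
      · intro h1; exact Prod.ext h1 h2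
    have : ∀ a, (Weyl d n x).diag a = ζ (dz x.1 a) := by
      intro a
      rw [Matrix.diag, weyl_apply hodd, h2, add_zero, if_pos rfl, dz_zero_right,
        mul_zero, sub_zero]
    rw [Finset.sum_congr rfl (fun a _ => this a), sum_zeta_dz_ite]
    by_cases h1 : x.1 = 0
    · rw [if_pos h1, if_pos (hx0.mpr h1)]
    · rw [if_neg h1, if_neg (fun hc => h1 (hx0.mp hc))]
  · have : ∀ a, (Weyl d n x).diag a = 0 := by
      intro a
      rw [Matrix.diag, weyl_apply hodd, if_neg]
      intro hc
      exact h2 (by simpa using (left_eq_add.mp hc))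
    rw [Finset.sum_congr rfl (fun a _ => this a), Finset.sum_const, smul_zero]
    rw [if_neg (fun hc => h2 (by rw [hc]; rfl))]

end Hudson4
end
noncomputable section
set_option linter.unusedSectionVars false
set_option maxHeartbeats 1000000

namespace Hudson5
open Hudson Hudson2 Hudson3 Hudson4

variable {d n : ℕ} [NeZero d]

local notation "ζ" => omgPow d

/-- characteristic function -/
def Xi (d n : ℕ) [NeZero d] (ψ : (Fin n → ZMod d) → ℂ)
    (x : (Fin n → ZMod d) × (Fin n → ZMod d)) : ℂ :=
  (Weyl d n x * outer d n ψ).trace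

lemma xi_apply (hodd : Odd d) (ψ : (Fin n → ZMod d) → ℂ)
    (x : (Fin n → ZMod d) × (Fin n → ZMod d)) :
    Xi d n ψ x = ∑ a, ζ (dz x.1 a - hz d * dz x.1 x.2) * (ψ (a - x.2) * conj (ψ a)) := by
  rw [Xi, Matrix.trace]
  apply Finset.sum_congr rfl
  intro a _
  rw [Matrix.diag, Matrix.mul_apply]
  rw [Finset.sum_eq_single (a - x.2)]
  · rw [weyl_apply hodd, if_pos (by abel), outer, Matrix.of_apply]
  · intro b _ hb
    rw [weyl_apply hodd, if_neg, zero_mul]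
    intro hc
    exact hb (by rw [hc]; abel)
  · intro h; exact absurd (Finset.mem_univ _) h

lemma trace_outer (ψ : (Fin n → ZMod d) → ℂ) : (outer d n ψ).trace = dotc ψ ψ := by
  rw [Matrix.trace, dotc]
  exact Finset.sum_congr rfl fun a _ => mul_comm _ _

lemma xi_zero (ψ : (Fin n → ZMod d) → ℂ) (hψ : dotc ψ ψ = 1) : Xi d n ψ 0 = 1 := by
  rw [Xi, weyl_zero, Matrix.one_mul, trace_outer, hψ]

lemma outer_conjT (ψ : (Fin n → ZMod d) → ℂ) : (outer d n ψ)ᴴ = outer d n ψ := by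
  ext a b
  simp only [Matrix.conjTranspose_apply, outer, Matrix.of_apply, star_mul',
    RCLike.star_def, Complex.conj_conj]
  ring

lemma conj_xi (hodd : Odd d) (ψ : (Fin n → ZMod d) → ℂ)
    (x : (Fin n → ZMod d) × (Fin n → ZMod d)) :
    conj (Xi d n ψ x) = Xi d n ψ (-x) := by
  have h1 : Weyl d n (-x) * outer d n ψ = ((outer d n ψ) * (Weyl d n x))ᴴ := by
    rw [Matrix.conjTranspose_mul, weyl_conjTranspose hodd, outer_conjT]
  rw [Xi, Xi, h1, Matrix.trace_conjTranspose, Matrix.trace_mul_comm]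
  rfl

lemma outer_mul_outer (ψ : (Fin n → ZMod d) → ℂ) (hψ : dotc ψ ψ = 1) :
    outer d n ψ * outer d n ψ = outer d n ψ := by
  ext a b
  rw [Matrix.mul_apply]
  have : ∀ c, outer d n ψ a c * outer d n ψ c b
      = (ψ a * conj (ψ b)) * (conj (ψ c) * ψ c) := by
    intro c
    rw [outer, Matrix.of_apply, Matrix.of_apply]
    ring
  rw [Finset.sum_congr rfl fun c _ => this c, ← Finset.mul_sum, ← dotc, hψ, mul_one]
  rfl

/-- Expansion of the density matrix in the Weyl basis. -/
lemma expansion (hodd : Odd d) (ψ : (Fin n → ZMod d) → ℂ) :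
    outer d n ψ = ((d : ℂ) ^ n)⁻¹ • ∑ x, Xi d n ψ x • Weyl d n (-x) := by
  have hd : ((d : ℂ) ^ n) ≠ 0 := by
    apply pow_ne_zero; exact_mod_cast (NeZero.ne d)
  ext a b
  rw [Matrix.smul_apply, Matrix.sum_apply]
  have hW : ∀ x : (Fin n → ZMod d) × (Fin n → ZMod d),
      (Xi d n ψ x • Weyl d n (-x)) a b
        = if x.2 = b - a then Xi d n ψ x * ζ (-(dz x.1 a) - hz d * dz x.1 x.2) else 0 := by
    intro x
    rw [Matrix.smul_apply, weyl_apply hodd, smul_eq_mul]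
    have hcond : (a = b + (-x).2) ↔ (x.2 = b - a) := by
      have e2 : (-x).2 = -x.2 := rfl
      rw [e2]
      constructor
      · intro h; rw [h]; abel
      · intro h; rw [h]; abel
    have hexp : dz (-x).1 a - hz d * dz (-x).1 (-x).2 = -(dz x.1 a) - hz d * dz x.1 x.2 := by
      have e1 : (-x).1 = -x.1 := rfl
      have e2 : (-x).2 = -x.2 := rfl
      rw [e1, e2, dz_neg_left, dz_neg_left, dz_neg_right]
      ring
    rw [hexp]
    by_cases h : x.2 = b - a
    · rw [if_pos (hcond.mpr h), if_pos h]
    · rw [if_neg (fun hc => h (hcond.mp hc)), if_neg h, mul_zero]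
  rw [Finset.sum_congr rfl fun x _ => hW x]
  rw [Fintype.sum_prod_type]
  have hinner : ∀ p : Fin n → ZMod d,
      (∑ q, if q = b - a then Xi d n ψ (p, q) * ζ (-(dz p a) - hz d * dz p q) else 0)
        = Xi d n ψ (p, b - a) * ζ (-(dz p a) - hz d * dz p (b - a)) :=
    fun p => (Finset.sum_ite_eq' Finset.univ (b - a) _).trans
      (by rw [if_pos (Finset.mem_univ _)])
  rw [Finset.sum_congr rfl fun p _ => hinner p]
  have hterm : ∀ p : Fin n → ZMod d,
      Xi d n ψ (p, b - a) * ζ (-(dz p a) - hz d * dz p (b - a))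
        = ∑ c, ζ (dz p (c - b)) * (ψ (c - (b - a)) * conj (ψ c)) := by
    intro p
    rw [xi_apply hodd, Finset.sum_mul]
    apply Finset.sum_congr rfl
    intro c _
    rw [mul_right_comm, ← zeta_add]
    congr 2
    dsimp only
    rw [dz_sub_right, dz_sub_right]
    linear_combination (dz p a - dz p b) * (two_mul_hz (d := d) hodd)
  rw [Finset.sum_congr rfl fun p _ => hterm p, Finset.sum_comm]
  have hcol : ∀ c : Fin n → ZMod d,
      (∑ p, ζ (dz p (c - b)) * (ψ (c - (b - a)) * conj (ψ c)))
        = (if c - b = 0 then (d : ℂ)^n else 0) * (ψ (c - (b - a)) * conj (ψ c)) := by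
    intro c
    rw [← Finset.sum_mul]
    congr 1
    rw [← sum_zeta_dz_ite]
    apply Finset.sum_congr rfl
    intro p _
    rw [dz_comm]
  rw [Finset.sum_congr rfl fun c _ => hcol c]
  have : ∀ c : Fin n → ZMod d,
      (if c - b = 0 then (d : ℂ)^n else 0) * (ψ (c - (b - a)) * conj (ψ c))
        = if c = b then (d : ℂ)^n * (ψ (c - (b - a)) * conj (ψ c)) else 0 := by
    intro c
    by_cases h : c = b
    · rw [if_pos h, if_pos (by rw [h, sub_self])]
    · rw [if_neg h, if_neg (fun hc => h (by rwa [sub_eq_zero] at hc)), zero_mul]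
  rw [Finset.sum_congr rfl fun c _ => this c, Finset.sum_ite_eq' Finset.univ b]
  simp only [Finset.mem_univ, if_true]
  rw [outer, Matrix.of_apply]
  have : b - (b - a) = a := by abel
  rw [this, smul_eq_mul, ← mul_assoc, inv_mul_cancel₀ hd, one_mul]

lemma parseval (hodd : Odd d) (ψ : (Fin n → ZMod d) → ℂ) (hψ : dotc ψ ψ = 1) :
    ∑ x, Xi d n ψ x * conj (Xi d n ψ x) = (d : ℂ) ^ n := by
  have hd : ((d : ℂ) ^ n) ≠ 0 := by
    apply pow_ne_zero; exact_mod_cast (NeZero.ne d)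
  have h1 : (1 : ℂ) = ((d : ℂ)^n)⁻¹ * ∑ x, Xi d n ψ x * conj (Xi d n ψ x) := by
    calc (1 : ℂ) = (outer d n ψ).trace := by rw [trace_outer, hψ]
      _ = (outer d n ψ * outer d n ψ).trace := by rw [outer_mul_outer ψ hψ]
      _ = (outer d n ψ * (((d : ℂ) ^ n)⁻¹ • ∑ x, Xi d n ψ x • Weyl d n (-x))).trace := by
          rw [← expansion hodd ψ]
      _ = ((d : ℂ)^n)⁻¹ * ∑ x, Xi d n ψ x * (outer d n ψ * Weyl d n (-x)).trace := by
          rw [Matrix.mul_smul, Matrix.trace_smul, Matrix.mul_sum, Matrix.trace_sum, smul_eq_mul]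
          congr 1
          apply Finset.sum_congr rfl
          intro x _
          rw [Matrix.mul_smul, Matrix.trace_smul, smul_eq_mul]
      _ = ((d : ℂ)^n)⁻¹ * ∑ x, Xi d n ψ x * conj (Xi d n ψ x) := by
          congr 1
          apply Finset.sum_congr rfl
          intro x _
          rw [Matrix.trace_mul_comm, conj_xi hodd]
          rfl
  field_simp at h1
  exact h1.symm

lemma symp_self (x : (Fin n → ZMod d) × (Fin n → ZMod d)) : symp x x = 0 := by
  rw [symp_eq_dz, dz_comm, sub_self]

lemma symp_neg_neg (x y : (Fin n → ZMod d) × (Fin n → ZMod d)) :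
    symp (-x) (-y) = symp x y := by
  rw [symp_neg_right, symp_antisymm, symp_neg_right, symp_antisymm y x]
  ring

/-- Third moment identity. -/
lemma triple (hodd : Odd d) (ψ : (Fin n → ZMod d) → ℂ) (hψ : dotc ψ ψ = 1) :
    ∑ y : (Fin n → ZMod d) × (Fin n → ZMod d), ∑ z : (Fin n → ZMod d) × (Fin n → ZMod d),
      Xi d n ψ y * Xi d n ψ z * Xi d n ψ (-(y + z)) * ζ (hz d * symp y z)
      = (d : ℂ) ^ n * (d : ℂ) ^ n := by
  have hd : ((d : ℂ) ^ n) ≠ 0 := by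
    apply pow_ne_zero; exact_mod_cast (NeZero.ne d)
  have key : ∀ y z : (Fin n → ZMod d) × (Fin n → ZMod d),
      (outer d n ψ * Weyl d n (-y) * Weyl d n (-z)).trace
        = ζ (hz d * symp y z) * Xi d n ψ (-(y + z)) := by
    intro y z
    rw [Matrix.mul_assoc, weyl_mul hodd, symp_neg_neg]
    rw [show -y + -z = -(y + z) by abel]
    rw [Matrix.mul_smul, Matrix.trace_smul, smul_eq_mul, Matrix.trace_mul_comm]
    rfl
  have h1 : (1 : ℂ) = ((d : ℂ)^n)⁻¹ * (((d : ℂ)^n)⁻¹ *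
      ∑ y, ∑ z, Xi d n ψ y * Xi d n ψ z * Xi d n ψ (-(y + z)) * ζ (hz d * symp y z)) := by
    calc (1 : ℂ) = (outer d n ψ).trace := by rw [trace_outer, hψ]
      _ = (outer d n ψ * outer d n ψ * outer d n ψ).trace := by
          rw [outer_mul_outer ψ hψ, outer_mul_outer ψ hψ]
      _ = ((outer d n ψ * (((d : ℂ) ^ n)⁻¹ • ∑ y, Xi d n ψ y • Weyl d n (-y))) *
            (((d : ℂ) ^ n)⁻¹ • ∑ z, Xi d n ψ z • Weyl d n (-z))).trace := by
          rw [← expansion hodd ψ]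
      _ = ((d : ℂ)^n)⁻¹ * (((d : ℂ)^n)⁻¹ *
            ∑ y, ∑ z, Xi d n ψ y * Xi d n ψ z * Xi d n ψ (-(y + z)) * ζ (hz d * symp y z)) := by
          simp only [Matrix.mul_smul, Matrix.smul_mul, Matrix.mul_sum, Matrix.sum_mul,
            Matrix.trace_smul, Matrix.trace_sum, smul_smul, smul_eq_mul, Finset.mul_sum,
            Finset.smul_sum, Finset.sum_mul]
          rw [Finset.sum_comm]
          congr 1
          funext y
          congr 1
          funext z
          rw [key y z]
          ring
  calc ∑ y, ∑ z, Xi d n ψ y * Xi d n ψ z * Xi d n ψ (-(y + z)) * ζ (hz d * symp y z)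
      = (d : ℂ)^n * ((d : ℂ)^n * (((d : ℂ)^n)⁻¹ * (((d : ℂ)^n)⁻¹ *
          ∑ y, ∑ z, Xi d n ψ y * Xi d n ψ z * Xi d n ψ (-(y + z)) * ζ (hz d * symp y z)))) := by
        rw [mul_inv_cancel_left₀ hd, mul_inv_cancel_left₀ hd]
    _ = (d : ℂ)^n * ((d : ℂ)^n * 1) := by rw [← h1]
    _ = (d : ℂ)^n * (d : ℂ)^n := by ring

end Hudson5
end
noncomputable section
set_option linter.unusedSectionVars false
set_option maxHeartbeats 4000000

namespace Hudson6
open Hudson Hudson2 Hudson3 Hudson4 Hudson5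

variable {d n : ℕ} [NeZero d]

local notation "ζ" => omgPow d
local notation "G" => (Fin n → ZMod d) × (Fin n → ZMod d)

lemma symp_neg_left (x y : G) : symp (-x) y = -symp x y := by
  rw [symp_antisymm, symp_neg_right, symp_antisymm y x]; ring

lemma symp_sub_right (x y z : G) : symp x (y - z) = symp x y - symp x z := by
  rw [sub_eq_add_neg, symp_add_right, symp_neg_right]; ring

lemma symp_sub_left (x y z : G) : symp (x - y) z = symp x z - symp y z := by
  rw [sub_eq_add_neg, symp_add_left, symp_neg_left]; ring

lemma hd_ne (d n : ℕ) [NeZero d] : ((d : ℂ) ^ n) ≠ 0 := by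
  apply pow_ne_zero; exact_mod_cast (NeZero.ne d)

/-- The Wigner function as symplectic Fourier transform of `Xi`. -/
lemma wig_complex (hodd : Odd d) (ψ : (Fin n → ZMod d) → ℂ) (x : G) :
    ((wigner d n ψ x : ℝ) : ℂ)
      = ((d : ℂ)^n)⁻¹ * (((d : ℂ)^n)⁻¹ * ∑ y, ζ (symp x y) * Xi d n ψ y) := by
  have hT1 : (PhasePoint d n x * outer d n ψ).trace
      = ((d : ℂ)^n)⁻¹ * ∑ y, ζ (-(symp x y)) * Xi d n ψ (-y) := by
    rw [PhasePoint, Matrix.smul_mul, Matrix.trace_smul, smul_eq_mul, Matrix.sum_mul,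
      Matrix.trace_sum]
    congr 1
    apply Finset.sum_congr rfl
    intro y _
    rw [Matrix.smul_mul, Matrix.trace_smul, smul_eq_mul, weyl_conjTranspose hodd]
    rfl
  have hT2 : (PhasePoint d n x * outer d n ψ).trace
      = ((d : ℂ)^n)⁻¹ * ∑ y, ζ (symp x y) * Xi d n ψ y := by
    rw [hT1]
    congr 1
    apply Fintype.sum_equiv (Equiv.neg _)
    intro y
    rw [Equiv.neg_apply, symp_neg_right]
  have hreal : conj ((PhasePoint d n x * outer d n ψ).trace)
      = (PhasePoint d n x * outer d n ψ).trace := by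
    conv_lhs => rw [hT1]
    rw [hT2, _root_.map_mul, map_sum]
    congr 1
    · rw [map_inv₀, map_pow, Complex.conj_natCast]
    · apply Finset.sum_congr rfl
      intro y _
      rw [_root_.map_mul, conj_zeta, neg_neg, conj_xi hodd, neg_neg]
  have hre : (((PhasePoint d n x * outer d n ψ).trace.re : ℝ) : ℂ)
      = (PhasePoint d n x * outer d n ψ).trace := Complex.conj_eq_iff_re.mp hreal
  rw [wigner]
  push_cast
  rw [hre, hT2]

/-- Fourier inversion. -/
lemma inversion (hodd : Odd d) (ψ : (Fin n → ZMod d) → ℂ) (z : G) :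
    Xi d n ψ z = ∑ x, ((wigner d n ψ x : ℝ) : ℂ) * ζ (-(symp x z)) := by
  symm
  calc ∑ x, ((wigner d n ψ x : ℝ) : ℂ) * ζ (-(symp x z))
      = ∑ x : G, ((d : ℂ)^n)⁻¹ * (((d : ℂ)^n)⁻¹ *
          ∑ y, Xi d n ψ y * ζ (symp x (y - z))) := by
        apply Finset.sum_congr rfl
        intro x _
        rw [wig_complex hodd ψ x]
        rw [mul_assoc, mul_assoc, Finset.sum_mul]
        congr 2
        apply Finset.sum_congr rfl
        intro y _
        rw [symp_sub_right, sub_eq_add_neg, zeta_add]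
        ring
    _ = ((d : ℂ)^n)⁻¹ * (((d : ℂ)^n)⁻¹ *
          ∑ x : G, ∑ y, Xi d n ψ y * ζ (symp x (y - z))) := by
        rw [← Finset.mul_sum]
        congr 1
        rw [← Finset.mul_sum]
    _ = ((d : ℂ)^n)⁻¹ * (((d : ℂ)^n)⁻¹ *
          ∑ y, Xi d n ψ y * ∑ x : G, ζ (symp x (y - z))) := by
        rw [Finset.sum_comm]
        congr 2
        apply Finset.sum_congr rfl
        intro y _
        rw [Finset.mul_sum]
    _ = ((d : ℂ)^n)⁻¹ * (((d : ℂ)^n)⁻¹ *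
          ∑ y, if y = z then Xi d n ψ y * ((d : ℂ)^n * (d : ℂ)^n) else 0) := by
        congr 2
        apply Finset.sum_congr rfl
        intro y _
        rw [sum_zeta_symp_left]
        by_cases h : y = z
        · rw [if_pos (by rw [h, sub_self]), if_pos h]
        · rw [if_neg (fun hc => h (by rwa [sub_eq_zero] at hc)), if_neg h, mul_zero]
    _ = ((d : ℂ)^n)⁻¹ * (((d : ℂ)^n)⁻¹ * (Xi d n ψ z * ((d : ℂ)^n * (d : ℂ)^n))) := by
        rw [Finset.sum_ite_eq' Finset.univ z, if_pos (Finset.mem_univ z)]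
    _ = Xi d n ψ z := by
        have h := hd_ne d n
        field_simp

/-- Total mass one. -/
lemma sum_wig (hodd : Odd d) (ψ : (Fin n → ZMod d) → ℂ) (hψ : dotc ψ ψ = 1) :
    ∑ x : G, ((wigner d n ψ x : ℝ) : ℂ) = 1 := by
  calc ∑ x : G, ((wigner d n ψ x : ℝ) : ℂ)
      = ∑ x : G, ((wigner d n ψ x : ℝ) : ℂ) * ζ (-(symp x 0)) := by
        apply Finset.sum_congr rfl
        intro x _
        rw [symp_zero_right, neg_zero, zeta_zero, mul_one]
    _ = Xi d n ψ 0 := (inversion hodd ψ 0).symm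
    _ = 1 := xi_zero ψ hψ

/-- Parseval for the Wigner function. -/
lemma wig_sq (hodd : Odd d) (ψ : (Fin n → ZMod d) → ℂ) (hψ : dotc ψ ψ = 1) :
    ∑ x : G, ((wigner d n ψ x : ℝ) : ℂ) * ((wigner d n ψ x : ℝ) : ℂ) = ((d : ℂ)^n)⁻¹ := by
  calc ∑ x : G, ((wigner d n ψ x : ℝ) : ℂ) * ((wigner d n ψ x : ℝ) : ℂ)
      = ∑ x : G, ((d : ℂ)^n)⁻¹ * (((d : ℂ)^n)⁻¹ *
          ∑ y, Xi d n ψ y * (((wigner d n ψ x : ℝ) : ℂ) * ζ (symp x y))) := by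
        apply Finset.sum_congr rfl
        intro x _
        nth_rewrite 2 [wig_complex hodd ψ x]
        rw [show ((wigner d n ψ x : ℝ) : ℂ) * (((d : ℂ)^n)⁻¹ * (((d : ℂ)^n)⁻¹ *
            ∑ y, ζ (symp x y) * Xi d n ψ y))
          = ((d : ℂ)^n)⁻¹ * (((d : ℂ)^n)⁻¹ *
            (((wigner d n ψ x : ℝ) : ℂ) * ∑ y, ζ (symp x y) * Xi d n ψ y)) from by ring]
        congr 2
        rw [Finset.mul_sum]
        apply Finset.sum_congr rfl
        intro y _
        ring
    _ = ((d : ℂ)^n)⁻¹ * (((d : ℂ)^n)⁻¹ *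
          ∑ y, Xi d n ψ y * ∑ x : G, ((wigner d n ψ x : ℝ) : ℂ) * ζ (symp x y)) := by
        rw [← Finset.mul_sum]
        congr 1
        rw [← Finset.mul_sum, Finset.sum_comm]
        congr 1
        apply Finset.sum_congr rfl
        intro y _
        rw [Finset.mul_sum]
    _ = ((d : ℂ)^n)⁻¹ * (((d : ℂ)^n)⁻¹ *
          ∑ y, Xi d n ψ y * conj (Xi d n ψ y)) := by
        congr 2
        apply Finset.sum_congr rfl
        intro y _
        congr 1
        rw [conj_xi hodd, inversion hodd ψ (-y)]
        apply Finset.sum_congr rfl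
        intro x _
        rw [symp_neg_right, neg_neg]
    _ = ((d : ℂ)^n)⁻¹ := by
        rw [parseval hodd ψ hψ]
        have h := hd_ne d n
        field_simp

lemma sum_comm3 {M : Type*} [AddCommMonoid M] {α β γ : Type*} [Fintype α] [Fintype β] [Fintype γ]
    (t : α → β → γ → M) :
    ∑ y, ∑ z, ∑ b, t y z b = ∑ b, ∑ y, ∑ z, t y z b := by
  rw [Finset.sum_congr rfl fun y _ => Finset.sum_comm, Finset.sum_comm]

/-- collapse kernel -/
lemma kernel (hodd : Odd d) (a b c : G) :
    ∑ y : G, ∑ z : G,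
      ζ (-(symp a y)) * ζ (-(symp b z)) * ζ (symp c (y + z)) * ζ (hz d * symp y z)
      = (d : ℂ)^n * (d : ℂ)^n * ζ (2 * symp (c - b) (c - a)) := by
  have hexp : ∀ y z : G, -(symp a y) + (-(symp b z)) + symp c (y + z) + hz d * symp y z
      = symp (c - a - hz d • z) y + symp (c - b) z := by
    intro y z
    rw [symp_sub_left, symp_sub_left, symp_smul_left, symp_antisymm z y,
      symp_add_right, symp_sub_left]
    ring
  have step1 : ∀ y z : G,
      ζ (-(symp a y)) * ζ (-(symp b z)) * ζ (symp c (y + z)) * ζ (hz d * symp y z)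
        = ζ (symp (c - a - hz d • z) y) * ζ (symp (c - b) z) := by
    intro y z
    rw [← zeta_add, ← zeta_add, ← zeta_add, ← zeta_add, hexp]
  rw [Finset.sum_congr rfl fun y _ => Finset.sum_congr rfl fun z _ => step1 y z]
  rw [Finset.sum_comm]
  have hcond : ∀ z : G, (c - a - hz d • z = 0) ↔ (z = (2 : ZMod d) • (c - a)) := by
    intro z
    constructor
    · intro h
      have h1 : hz d • z = c - a := (sub_eq_zero.mp h).symm
      rw [← h1, smul_smul, two_mul_hz hodd, one_smul]
    · intro h
      rw [h, smul_smul, show hz d * 2 = 1 from by rw [mul_comm]; exact two_mul_hz hodd,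
        one_smul, sub_self]
  have step2 : ∀ z : G, ∑ y : G, ζ (symp (c - a - hz d • z) y) * ζ (symp (c - b) z)
      = if z = (2 : ZMod d) • (c - a) then ((d : ℂ)^n * (d : ℂ)^n) * ζ (symp (c - b) z) else 0 := by
    intro z
    rw [← Finset.sum_mul, sum_zeta_symp_right]
    by_cases h : z = (2 : ZMod d) • (c - a)
    · rw [if_pos ((hcond z).mpr h), if_pos h]
    · rw [if_neg (fun hc => h ((hcond z).mp hc)), if_neg h, zero_mul]
  rw [Finset.sum_congr rfl fun z _ => step2 z]
  have : ∀ z : G, (if z = (2 : ZMod d) • (c - a)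
        then ((d : ℂ)^n * (d : ℂ)^n) * ζ (symp (c - b) z) else 0)
      = if z = (2 : ZMod d) • (c - a)
        then ((d : ℂ)^n * (d : ℂ)^n) * ζ (symp (c - b) ((2 : ZMod d) • (c - a))) else 0 := by
    intro z
    by_cases h : z = (2 : ZMod d) • (c - a)
    · rw [if_pos h, if_pos h, h]
    · rw [if_neg h, if_neg h]
  rw [Finset.sum_congr rfl fun z _ => this z, Finset.sum_ite_eq' Finset.univ _,
    if_pos (Finset.mem_univ _), symp_smul_right]

end Hudson6
end
noncomputable section
set_option linter.unusedSectionVars false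
set_option maxHeartbeats 4000000

namespace Hudson7
open Hudson Hudson2 Hudson3 Hudson4 Hudson5 Hudson6

variable {d n : ℕ} [NeZero d]

local notation "ζ" => omgPow d
local notation "G" => (Fin n → ZMod d) × (Fin n → ZMod d)

/-- The key third-moment identity in terms of the Wigner function. -/
lemma identityIV (hodd : Odd d) (ψ : (Fin n → ZMod d) → ℂ) (hψ : dotc ψ ψ = 1) :
    ∑ a : G, ∑ b : G, ∑ c : G,
      ((wigner d n ψ a : ℝ) : ℂ) * ((wigner d n ψ b : ℝ) : ℂ) * ((wigner d n ψ c : ℝ) : ℂ)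
        * ζ (2 * symp (a - b) (a - c)) = 1 := by
  have hdn := hd_ne d n
  set W : G → ℂ := fun x => ((wigner d n ψ x : ℝ) : ℂ) with hW
  have claimA : ∀ y z : G,
      Xi d n ψ y * Xi d n ψ z * Xi d n ψ (-(y + z)) * ζ (hz d * symp y z)
        = ∑ a : G, ∑ b : G, ∑ c : G, W a * W b * W c *
            (ζ (-(symp c y)) * ζ (-(symp b z)) * ζ (symp a (y + z)) * ζ (hz d * symp y z)) := by
    intro y z
    simp only [hW]
    rw [inversion hodd ψ y, inversion hodd ψ z, inversion hodd ψ (-(y + z))]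
    have hC : ∑ x : G, ((wigner d n ψ x : ℝ) : ℂ) * ζ (-(symp x (-(y + z))))
        = ∑ c : G, ((wigner d n ψ c : ℝ) : ℂ) * ζ (symp c (y + z)) := by
      apply Finset.sum_congr rfl
      intro c _
      rw [symp_neg_right, neg_neg]
    rw [hC]
    simp only [Finset.sum_mul, Finset.mul_sum]
    apply Finset.sum_congr rfl; intro a _
    apply Finset.sum_congr rfl; intro b _
    apply Finset.sum_congr rfl; intro c _
    ring
  have swap :
      ∑ y : G, ∑ z : G, ∑ a : G, ∑ b : G, ∑ c : G, (W a * W b * W c *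
          (ζ (-(symp c y)) * ζ (-(symp b z)) * ζ (symp a (y + z)) * ζ (hz d * symp y z)))
      = ∑ a : G, ∑ b : G, ∑ c : G, ∑ y : G, ∑ z : G, (W a * W b * W c *
          (ζ (-(symp c y)) * ζ (-(symp b z)) * ζ (symp a (y + z)) * ζ (hz d * symp y z))) := by
    rw [sum_comm3 (fun y z a => ∑ b : G, ∑ c : G, _)]
    apply Finset.sum_congr rfl; intro a _
    rw [sum_comm3 (fun y z b => ∑ c : G, _)]
    apply Finset.sum_congr rfl; intro b _
    exact sum_comm3 _
  have hinner : ∀ a b c : G,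
      ∑ y : G, ∑ z : G, (W a * W b * W c *
          (ζ (-(symp c y)) * ζ (-(symp b z)) * ζ (symp a (y + z)) * ζ (hz d * symp y z)))
      = (d : ℂ)^n * (d : ℂ)^n * (W a * W b * W c * ζ (2 * symp (a - b) (a - c))) := by
    intro a b c
    rw [show ∑ y : G, ∑ z : G, (W a * W b * W c *
          (ζ (-(symp c y)) * ζ (-(symp b z)) * ζ (symp a (y + z)) * ζ (hz d * symp y z)))
        = W a * W b * W c * ∑ y : G, ∑ z : G,
          (ζ (-(symp c y)) * ζ (-(symp b z)) * ζ (symp a (y + z)) * ζ (hz d * symp y z)) from by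
      rw [Finset.mul_sum]
      apply Finset.sum_congr rfl; intro y _
      rw [Finset.mul_sum]]
    rw [kernel hodd c b a]
    ring
  have main : (d : ℂ)^n * (d : ℂ)^n
      = (d : ℂ)^n * (d : ℂ)^n * ∑ a : G, ∑ b : G, ∑ c : G,
          (W a * W b * W c * ζ (2 * symp (a - b) (a - c))) := by
    calc (d : ℂ)^n * (d : ℂ)^n
        = ∑ y : G, ∑ z : G, Xi d n ψ y * Xi d n ψ z * Xi d n ψ (-(y + z))
            * ζ (hz d * symp y z) := (triple hodd ψ hψ).symm
      _ = ∑ y : G, ∑ z : G, ∑ a : G, ∑ b : G, ∑ c : G, (W a * W b * W c *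
            (ζ (-(symp c y)) * ζ (-(symp b z)) * ζ (symp a (y + z)) * ζ (hz d * symp y z))) := by
          apply Finset.sum_congr rfl; intro y _
          apply Finset.sum_congr rfl; intro z _
          exact claimA y z
      _ = ∑ a : G, ∑ b : G, ∑ c : G, ∑ y : G, ∑ z : G, (W a * W b * W c *
            (ζ (-(symp c y)) * ζ (-(symp b z)) * ζ (symp a (y + z)) * ζ (hz d * symp y z))) :=
          swap
      _ = ∑ a : G, ∑ b : G, ∑ c : G, (d : ℂ)^n * (d : ℂ)^n *
            (W a * W b * W c * ζ (2 * symp (a - b) (a - c))) := by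
          apply Finset.sum_congr rfl; intro a _
          apply Finset.sum_congr rfl; intro b _
          apply Finset.sum_congr rfl; intro c _
          exact hinner a b c
      _ = (d : ℂ)^n * (d : ℂ)^n * ∑ a : G, ∑ b : G, ∑ c : G,
            (W a * W b * W c * ζ (2 * symp (a - b) (a - c))) := by
          rw [Finset.mul_sum]
          apply Finset.sum_congr rfl; intro a _
          rw [Finset.mul_sum]
          apply Finset.sum_congr rfl; intro b _
          rw [Finset.mul_sum]
  have hprod : ((d : ℂ)^n * (d : ℂ)^n) ≠ 0 := mul_ne_zero hdn hdn
  have h2 : ((d : ℂ)^n * (d : ℂ)^n) * 1 = ((d : ℂ)^n * (d : ℂ)^n) * ∑ a : G, ∑ b : G, ∑ c : G,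
      (W a * W b * W c * ζ (2 * symp (a - b) (a - c))) := by
    rw [mul_one]; exact main
  exact (mul_left_cancel₀ hprod h2).symm

end Hudson7
end
noncomputable section
set_option linter.unusedSectionVars false
set_option maxHeartbeats 4000000

namespace Hudson8
open Hudson Hudson2 Hudson3 Hudson4 Hudson5 Hudson6 Hudson7

variable {d n : ℕ} [NeZero d]

local notation "ζ" => omgPow d
local notation "G" => (Fin n → ZMod d) × (Fin n → ZMod d)

lemma re_real_mul (r : ℝ) (z : ℂ) : ((r : ℂ) * z).re = r * z.re := by
  simp [Complex.mul_re]

lemma zeta_re_eq_one {k : ZMod d} (h : (ζ k).re = 1) : k = 0 := by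
  have habs : ‖ζ k‖ = 1 := abs_zeta k
  have h2 : Complex.normSq (ζ k) = 1 := by
    rw [← Complex.sq_norm, habs]; norm_num
  have key := Complex.normSq_apply (ζ k)
  rw [key, h] at h2
  have him : (ζ k).im = 0 := mul_self_eq_zero.mp (by linarith)
  have hone : ζ k = 1 := Complex.ext (by rw [h, Complex.one_re]) (by rw [him, Complex.one_im])
  exact (zeta_eq_one_iff _).mp hone

lemma sum_wig_real (hodd : Odd d) (ψ : (Fin n → ZMod d) → ℂ) (hψ : dotc ψ ψ = 1) :
    ∑ x : G, wigner d n ψ x = 1 := by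
  have h := sum_wig hodd ψ hψ
  rw [← Complex.ofReal_sum] at h
  exact_mod_cast h

lemma wig_sq_real (hodd : Odd d) (ψ : (Fin n → ZMod d) → ℂ) (hψ : dotc ψ ψ = 1) :
    ∑ x : G, wigner d n ψ x * wigner d n ψ x = ((d : ℝ)^n)⁻¹ := by
  have h := wig_sq hodd ψ hψ
  have h2 : ∑ x : G, ((wigner d n ψ x : ℝ) : ℂ) * ((wigner d n ψ x : ℝ) : ℂ)
      = ((∑ x : G, wigner d n ψ x * wigner d n ψ x : ℝ) : ℂ) := by
    rw [Complex.ofReal_sum]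
    apply Finset.sum_congr rfl
    intro x _
    push_cast
    ring
  rw [h2] at h
  have h3 : ((((d : ℝ)^n)⁻¹ : ℝ) : ℂ) = ((d : ℂ)^n)⁻¹ := by push_cast; ring
  rw [← h3] at h
  exact_mod_cast h

/-- Support isotropy from the equality case. -/
lemma support_isotropic (hodd : Odd d) (ψ : (Fin n → ZMod d) → ℂ) (hψ : dotc ψ ψ = 1)
    (hw : ∀ x : G, 0 ≤ wigner d n ψ x) :
    ∀ a b c : G, wigner d n ψ a ≠ 0 → wigner d n ψ b ≠ 0 → wigner d n ψ c ≠ 0 →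
      symp (a - b) (a - c) = 0 := by
  have hre : ∑ a : G, ∑ b : G, ∑ c : G,
      (wigner d n ψ a * wigner d n ψ b * wigner d n ψ c)
        * (ζ (2 * symp (a - b) (a - c))).re = 1 := by
    have h := congrArg Complex.re (identityIV hodd ψ hψ)
    rw [Complex.one_re] at h
    rw [← h]
    rw [Complex.re_sum]
    apply Finset.sum_congr rfl; intro a _
    rw [Complex.re_sum]
    apply Finset.sum_congr rfl; intro b _
    rw [Complex.re_sum]
    apply Finset.sum_congr rfl; intro c _
    rw [show ((wigner d n ψ a : ℝ) : ℂ) * ((wigner d n ψ b : ℝ) : ℂ)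
          * ((wigner d n ψ c : ℝ) : ℂ) * ζ (2 * symp (a - b) (a - c))
        = ((wigner d n ψ a * wigner d n ψ b * wigner d n ψ c : ℝ) : ℂ)
          * ζ (2 * symp (a - b) (a - c)) from by push_cast; ring]
    rw [re_real_mul]
  have hone : ∑ a : G, ∑ b : G, ∑ c : G,
      (wigner d n ψ a * wigner d n ψ b * wigner d n ψ c) = 1 := by
    have hs := sum_wig_real hodd ψ hψ
    have e1 : ∀ a : G, ∑ b : G, ∑ c : G,
        (wigner d n ψ a * wigner d n ψ b * wigner d n ψ c)
        = wigner d n ψ a * ((∑ x : G, wigner d n ψ x) * (∑ x : G, wigner d n ψ x)) := by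
      intro a
      rw [Finset.sum_mul_sum, Finset.mul_sum]
      apply Finset.sum_congr rfl; intro b _
      rw [Finset.mul_sum]
      apply Finset.sum_congr rfl; intro c _
      ring
    rw [Finset.sum_congr rfl fun a _ => e1 a, ← Finset.sum_mul, hs]
    ring
  have hdiff : ∑ a : G, ∑ b : G, ∑ c : G,
      (wigner d n ψ a * wigner d n ψ b * wigner d n ψ c)
        * (1 - (ζ (2 * symp (a - b) (a - c))).re) = 0 := by
    have : ∀ a : G, ∀ b : G, ∀ c : G,
        (wigner d n ψ a * wigner d n ψ b * wigner d n ψ c)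
          * (1 - (ζ (2 * symp (a - b) (a - c))).re)
        = (wigner d n ψ a * wigner d n ψ b * wigner d n ψ c)
          - (wigner d n ψ a * wigner d n ψ b * wigner d n ψ c)
            * (ζ (2 * symp (a - b) (a - c))).re := by
      intro a b c; ring
    simp only [this, Finset.sum_sub_distrib]
    rw [hone, hre]
    ring
  have hterm_nonneg : ∀ a : G, ∀ b : G, ∀ c : G,
      0 ≤ (wigner d n ψ a * wigner d n ψ b * wigner d n ψ c)
        * (1 - (ζ (2 * symp (a - b) (a - c))).re) := by
    intro a b c
    apply mul_nonneg
    · exact mul_nonneg (mul_nonneg (hw a) (hw b)) (hw c)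
    · rw [sub_nonneg]
      exact (Complex.re_le_norm _).trans_eq (abs_zeta _)
  have h1 := (Finset.sum_eq_zero_iff_of_nonneg
    (fun a _ => Finset.sum_nonneg fun b _ => Finset.sum_nonneg fun c _ =>
      hterm_nonneg a b c)).mp hdiff
  intro a b c ha hb hc
  have h2 := (Finset.sum_eq_zero_iff_of_nonneg
    (fun b _ => Finset.sum_nonneg fun c _ => hterm_nonneg a b c)).mp
      (h1 a (Finset.mem_univ a)) b (Finset.mem_univ b)
  have h3 := (Finset.sum_eq_zero_iff_of_nonneg
    (fun c _ => hterm_nonneg a b c)).mp h2 c (Finset.mem_univ c)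
  have hpos : 0 < wigner d n ψ a * wigner d n ψ b * wigner d n ψ c := by
    apply mul_pos
    apply mul_pos
    · exact (hw a).lt_of_ne (Ne.symm ha)
    · exact (hw b).lt_of_ne (Ne.symm hb)
    · exact (hw c).lt_of_ne (Ne.symm hc)
  have hre1 : (ζ (2 * symp (a - b) (a - c))).re = 1 := by
    rcases mul_eq_zero.mp h3 with h | h
    · exact absurd h hpos.ne'
    · linarith
  have h0 : (2 : ZMod d) * symp (a - b) (a - c) = 0 := zeta_re_eq_one hre1
  calc symp (a - b) (a - c) = hz d * ((2 : ZMod d) * symp (a - b) (a - c)) := by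
        rw [← mul_assoc, mul_comm (hz d) 2, two_mul_hz hodd, one_mul]
    _ = 0 := by rw [h0, mul_zero]

lemma conj_dotc (f g : (Fin n → ZMod d) → ℂ) : conj (dotc f g) = dotc g f := by
  rw [dotc, dotc, map_sum]
  apply Finset.sum_congr rfl
  intro a _
  rw [_root_.map_mul, Complex.conj_conj]
  ring

lemma dotc_mulVec (A : Matrix (Fin n → ZMod d) (Fin n → ZMod d) ℂ) (ψ : (Fin n → ZMod d) → ℂ) :
    dotc ψ (A.mulVec ψ) = (A * outer d n ψ).trace := by
  rw [dotc, Matrix.trace]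
  apply Finset.sum_congr rfl
  intro a _
  rw [Matrix.diag, Matrix.mul_apply, Matrix.mulVec, dotProduct, Finset.mul_sum]
  apply Finset.sum_congr rfl
  intro b _
  rw [outer, Matrix.of_apply]
  ring

lemma dotc_mulVec_self (A : Matrix (Fin n → ZMod d) (Fin n → ZMod d) ℂ)
    (ψ : (Fin n → ZMod d) → ℂ) (hA : Aᴴ * A = 1) :
    dotc (A.mulVec ψ) (A.mulVec ψ) = dotc ψ ψ := by
  rw [dotc, dotc]
  have e1 : ∀ a, conj (A.mulVec ψ a) * (A.mulVec ψ a)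
      = ∑ b, ∑ c, (conj (A a b) * A a c) * (conj (ψ b) * ψ c) := by
    intro a
    rw [Matrix.mulVec, dotProduct, map_sum, Finset.sum_mul_sum]
    apply Finset.sum_congr rfl; intro b _
    apply Finset.sum_congr rfl; intro c _
    rw [_root_.map_mul]
    ring
  rw [Finset.sum_congr rfl fun a _ => e1 a]
  rw [Finset.sum_comm]
  have e2 : ∀ b, ∑ a, ∑ c, (conj (A a b) * A a c) * (conj (ψ b) * ψ c)
      = ∑ c, (Aᴴ * A) b c * (conj (ψ b) * ψ c) := by
    intro b
    rw [Finset.sum_comm]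
    apply Finset.sum_congr rfl; intro c _
    rw [Matrix.mul_apply, Finset.sum_mul]
    apply Finset.sum_congr rfl; intro a _
    rw [Matrix.conjTranspose_apply]
    rfl
  rw [Finset.sum_congr rfl fun b _ => e2 b]
  apply Finset.sum_congr rfl
  intro b _
  rw [hA]
  have e3 : ∀ c, (1 : Matrix (Fin n → ZMod d) (Fin n → ZMod d) ℂ) b c * (conj (ψ b) * ψ c)
      = if c = b then conj (ψ b) * ψ c else 0 := by
    intro c
    rw [Matrix.one_apply]
    by_cases h : b = c
    · rw [if_pos h, if_pos h.symm, one_mul]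
    · rw [if_neg h, if_neg (Ne.symm h), zero_mul]
  rw [Finset.sum_congr rfl fun c _ => e3 c, Finset.sum_ite_eq' Finset.univ b,
    if_pos (Finset.mem_univ b)]

lemma weyl_unitary (hodd : Odd d) (u : G) : (Weyl d n u)ᴴ * Weyl d n u = 1 := by
  rw [weyl_conjTranspose hodd, weyl_mul hodd, symp_neg_left, symp_self, neg_zero,
    mul_zero, zeta_zero, one_smul, neg_add_cancel, weyl_zero]

lemma eigen (hodd : Odd d) (ψ : (Fin n → ZMod d) → ℂ) (hψ : dotc ψ ψ = 1) (u : G)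
    (h1 : Xi d n ψ u * conj (Xi d n ψ u) = 1) :
    (Weyl d n u).mulVec ψ = Xi d n ψ u • ψ := by
  set v := (Weyl d n u).mulVec ψ with hv
  set c := Xi d n ψ u with hc
  have hv1 : dotc v v = 1 := by
    rw [hv, dotc_mulVec_self _ ψ (weyl_unitary hodd u), hψ]
  have hv2 : dotc ψ v = c := by
    rw [hv, dotc_mulVec, hc]
    rfl
  have hv3 : dotc v ψ = conj c := by
    rw [← conj_dotc, hv2]
  have hee : ∑ a, Complex.normSq (v a - c * ψ a) = 0 := by
    have hE : ((∑ a, Complex.normSq (v a - c * ψ a) : ℝ) : ℂ)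
        = dotc v v - conj c * dotc ψ v - c * dotc v ψ + (c * conj c) * dotc ψ ψ := by
      rw [Complex.ofReal_sum, dotc, dotc, dotc, dotc, Finset.mul_sum, Finset.mul_sum,
        Finset.mul_sum, ← Finset.sum_sub_distrib, ← Finset.sum_sub_distrib,
        ← Finset.sum_add_distrib]
      apply Finset.sum_congr rfl
      intro a _
      rw [← Complex.mul_conj, map_sub, _root_.map_mul]
      ring
    rw [hv1, hv2, hv3, hψ, h1] at hE
    have h1' : conj c * c = 1 := by rw [mul_comm]; exact h1
    have hE0 : ((∑ a, Complex.normSq (v a - c * ψ a) : ℝ) : ℂ) = 0 := by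
      rw [hE]
      linear_combination (-1 : ℂ) * h1'
    exact_mod_cast hE0
  funext a
  have ha : Complex.normSq (v a - c * ψ a) = 0 :=
    (Finset.sum_eq_zero_iff_of_nonneg (fun a _ => Complex.normSq_nonneg _)).mp hee a
      (Finset.mem_univ a)
  have hz0 : v a - c * ψ a = 0 := Complex.normSq_eq_zero.mp ha
  have hva : v a = c * ψ a := sub_eq_zero.mp hz0
  rw [hva]
  rfl

end Hudson8
end
noncomputable section
set_option linter.unusedSectionVars false
set_option maxHeartbeats 4000000

namespace Hudson9
open Hudson Hudson2 Hudson3 Hudson4 Hudson5 Hudson6 Hudson7 Hudson8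

local notation "ζ" => omgPow _

theorem hudson_main (d n : ℕ) [NeZero d] (hodd : Odd d)
    (ψ : (Fin n → ZMod d) → ℂ) (hψ : dotc ψ ψ = 1)
    (hw : ∀ x : (Fin n → ZMod d) × (Fin n → ZMod d), 0 ≤ wigner d n ψ x) :
    IsStabilizerState d n ψ := by
  classical
  refine ⟨hψ, ?_⟩
  set K : Finset ((Fin n → ZMod d) × (Fin n → ZMod d)) :=
    Finset.univ.filter (fun x => wigner d n ψ x ≠ 0) with hK
  have hsum1 := sum_wig_real hodd ψ hψ
  have hsumK : ∑ x ∈ K, wigner d n ψ x = 1 := by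
    rw [hK, Finset.sum_filter_ne_zero, hsum1]
  have hKne : K.Nonempty := Finset.nonempty_of_sum_ne_zero (by rw [hsumK]; norm_num)
  obtain ⟨z₀, hz₀⟩ := hKne
  have hz₀w : wigner d n ψ z₀ ≠ 0 := (Finset.mem_filter.mp hz₀).2
  set M : Submodule (ZMod d) ((Fin n → ZMod d) × (Fin n → ZMod d)) :=
    Submodule.span (ZMod d) ((fun x => x - z₀) '' (K : Set _)) with hM
  have hbase : ∀ x ∈ K, x - z₀ ∈ M := by
    intro x hx
    exact Submodule.subset_span ⟨x, Finset.mem_coe.mpr hx, rfl⟩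
  -- isotropy of M
  have hiso1 : ∀ v, v ∈ M → ∀ x ∈ K, symp (x - z₀) v = 0 := by
    intro v hv
    induction hv using Submodule.span_induction with
    | mem y hy =>
        obtain ⟨yy, hyy, rfl⟩ := hy
        intro x hx
        have hwx : wigner d n ψ x ≠ 0 := (Finset.mem_filter.mp hx).2
        have hwy : wigner d n ψ yy ≠ 0 := (Finset.mem_filter.mp (Finset.mem_coe.mp hyy)).2
        have hkey := support_isotropic hodd ψ hψ hw z₀ x yy hz₀w hwx hwy
        show symp (x - z₀) (yy - z₀) = 0
        have e1 : x - z₀ = -(z₀ - x) := by abel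
        have e2 : yy - z₀ = -(z₀ - yy) := by abel
        rw [e1, e2, symp_neg_neg, hkey]
    | zero => intro x hx; exact symp_zero_right _
    | add y z hy hz ihy ihz =>
        intro x hx
        rw [symp_add_right, ihy x hx, ihz x hx, add_zero]
    | smul c y hy ihy =>
        intro x hx
        rw [symp_smul_right, ihy x hx, mul_zero]
  have hMiso : ∀ u ∈ M, ∀ v ∈ M, symp u v = 0 := by
    intro u hu
    induction hu using Submodule.span_induction with
    | mem y hy =>
        obtain ⟨yy, hyy, rfl⟩ := hy
        intro v hv
        exact hiso1 v hv yy (Finset.mem_coe.mp hyy)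
    | zero => intro v hv; exact symp_zero_left _
    | add y z hy hz ihy ihz =>
        intro v hv
        rw [symp_add_left, ihy v hv, ihz v hv, add_zero]
    | smul c y hy ihy =>
        intro v hv
        rw [symp_smul_left, ihy v hv, mul_zero]
  -- Xi on M
  have hXiM : ∀ u ∈ M, Xi d n ψ u = omgPow d (-(symp z₀ u)) := by
    intro u hu
    rw [inversion hodd ψ u]
    have e : ∀ x : (Fin n → ZMod d) × (Fin n → ZMod d),
        ((wigner d n ψ x : ℝ) : ℂ) * omgPow d (-(symp x u))
          = ((wigner d n ψ x : ℝ) : ℂ) * omgPow d (-(symp z₀ u)) := by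
      intro x
      by_cases hx : x ∈ K
      · have h0 : symp (x - z₀) u = 0 := hMiso (x - z₀) (hbase x hx) u hu
        rw [symp_sub_left] at h0
        rw [sub_eq_zero.mp h0]
      · have hx0 : wigner d n ψ x = 0 := by
          by_contra hne
          exact hx (Finset.mem_filter.mpr ⟨Finset.mem_univ x, hne⟩)
        rw [hx0]
        push_cast
        rw [zero_mul, zero_mul]
    rw [Finset.sum_congr rfl fun x _ => e x, ← Finset.sum_mul, sum_wig hodd ψ hψ, one_mul]
  have habs : ∀ u ∈ M, Xi d n ψ u * conj (Xi d n ψ u) = 1 := by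
    intro u hu
    rw [hXiM u hu, conj_zeta, neg_neg, mul_comm]
    exact zeta_mul_neg _
  -- cardinalities
  have hdpos : (0 : ℝ) < (d : ℝ)^n := by
    have : (0 : ℝ) < (d : ℝ) := by
      exact_mod_cast Nat.pos_of_ne_zero (NeZero.ne d)
    positivity
  have hKcard : (d : ℝ)^n ≤ (K.card : ℝ) := by
    have hCS := Finset.sum_mul_sq_le_sq_mul_sq K (fun _ => (1:ℝ)) (fun x => wigner d n ψ x)
    simp only [one_mul, one_pow, Finset.sum_const, nsmul_eq_mul, mul_one] at hCS
    rw [hsumK] at hCS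
    have hw2 : ∑ x ∈ K, (wigner d n ψ x)^2 ≤ ((d:ℝ)^n)⁻¹ := by
      rw [← wig_sq_real hodd ψ hψ]
      calc ∑ x ∈ K, (wigner d n ψ x)^2
          ≤ ∑ x : (Fin n → ZMod d) × (Fin n → ZMod d), (wigner d n ψ x)^2 :=
            Finset.sum_le_sum_of_subset_of_nonneg (Finset.subset_univ K)
              (fun x _ _ => sq_nonneg _)
        _ = ∑ x : (Fin n → ZMod d) × (Fin n → ZMod d), wigner d n ψ x * wigner d n ψ x := by
            apply Finset.sum_congr rfl; intro x _; ring
    have h2 : (1:ℝ) ≤ (K.card : ℝ) * ((d:ℝ)^n)⁻¹ := by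
      have hKc : (0:ℝ) ≤ (K.card : ℝ) := Nat.cast_nonneg _
      nlinarith [hCS, hw2]
    have h3 : (d:ℝ)^n * ((K.card : ℝ) * ((d:ℝ)^n)⁻¹) = (K.card : ℝ) := by
      field_simp
    have h4 := mul_le_mul_of_nonneg_left h2 hdpos.le
    rw [mul_one, h3] at h4
    exact h4
  set Mfin : Finset ((Fin n → ZMod d) × (Fin n → ZMod d)) :=
    Finset.univ.filter (fun x => x ∈ M) with hMfin
  have hparse : ∑ x : (Fin n → ZMod d) × (Fin n → ZMod d), Complex.normSq (Xi d n ψ x)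
      = (d : ℝ)^n := by
    have h := parseval hodd ψ hψ
    have h2 : ∑ x : (Fin n → ZMod d) × (Fin n → ZMod d),
        ((Complex.normSq (Xi d n ψ x) : ℝ) : ℂ) = (d:ℂ)^n := by
      rw [← h]
      apply Finset.sum_congr rfl
      intro x _
      rw [Complex.mul_conj]
    rw [← Complex.ofReal_sum] at h2
    exact_mod_cast h2
  have hMle : (Mfin.card : ℝ) ≤ (d : ℝ)^n := by
    have hone : ∀ x ∈ Mfin, Complex.normSq (Xi d n ψ x) = 1 := by
      intro x hx
      have := habs x (Finset.mem_filter.mp hx).2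
      rw [Complex.mul_conj] at this
      exact_mod_cast this
    calc (Mfin.card : ℝ) = ∑ x ∈ Mfin, (1:ℝ) := by
          rw [Finset.sum_const, nsmul_eq_mul, mul_one]
      _ = ∑ x ∈ Mfin, Complex.normSq (Xi d n ψ x) :=
          (Finset.sum_congr rfl fun x hx => (hone x hx).symm)
      _ ≤ ∑ x : (Fin n → ZMod d) × (Fin n → ZMod d), Complex.normSq (Xi d n ψ x) :=
          Finset.sum_le_sum_of_subset_of_nonneg (Finset.subset_univ Mfin)
            (fun x _ _ => Complex.normSq_nonneg _)
      _ = (d : ℝ)^n := hparse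
  have hinj : K.card ≤ Mfin.card := by
    apply Finset.card_le_card_of_injOn (fun x => x - z₀)
    · intro x hx
      exact Finset.mem_filter.mpr ⟨Finset.mem_univ _, hbase x hx⟩
    · intro x _ y _ h
      have : x - z₀ = y - z₀ := h
      exact sub_left_injective this
  have hMcard : Mfin.card = d ^ n := by
    have hle1 : ((d^n : ℕ) : ℝ) ≤ (Mfin.card : ℝ) := by
      push_cast
      calc (d:ℝ)^n ≤ (K.card : ℝ) := hKcard
        _ ≤ (Mfin.card : ℝ) := by exact_mod_cast hinj
    have hle2 : (Mfin.card : ℝ) ≤ ((d^n : ℕ) : ℝ) := by push_cast; exact hMle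
    exact_mod_cast le_antisymm hle2 hle1
  refine ⟨M, hMiso, ?_, fun x hx => ⟨Xi d n ψ x, eigen hodd ψ hψ x (habs x hx)⟩⟩
  rw [Nat.card_eq_fintype_card, ← hMcard, hMfin]
  exact Fintype.card_subtype _

end Hudson9
end

/-- Discrete Hudson theorem: for `d` an odd prime, a pure state on `(ℂ^d)^{⊗n}`
whose Wigner function is everywhere nonnegative is a stabilizer state. -/
theorem stmt6 (d n : ℕ) [NeZero d] (hd : d.Prime) (hodd : Odd d)
    (ψ : (Fin n → ZMod d) → ℂ) (hψ : dotc ψ ψ = 1)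
    (hw : ∀ x : ((Fin n → ZMod d) × (Fin n → ZMod d)), 0 ≤ wigner d n ψ x) :
    IsStabilizerState d n ψ :=
  Hudson9.hudson_main d n hodd ψ hψ hw
end

section
/- Let d ≥ 2, δ = 1/(2d), and ψ a pure state of n qudits such that |tr(ψ W_x)|^2 > 1 - δ^2 and |tr(ψ W_y)|^2 > 1 - δ^2 for two Weyl operators W_x, W_y. Then W_x and W_y commute. -/
open scoped BigOperators ComplexConjugate
open Finset Matrix

set_option linter.unusedSectionVars false
set_option maxHeartbeats 1000000

noncomputable section
namespace S8

variable {d n : ℕ} [NeZero d]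

lemma abs_omg (d : ℕ) : ‖omg d‖ = 1 := by
  rw [show omg d = Complex.exp (((2 * Real.pi / d : ℝ) : ℂ) * Complex.I) by
    unfold omg; congr 1; push_cast; ring]
  exact Complex.norm_exp_ofReal_mul_I _

lemma abs_tau (d : ℕ) : ‖tau d‖ = 1 := by
  rw [show tau d = Complex.exp (((Real.pi * ((d:ℝ) ^ 2 + 1) / d : ℝ) : ℂ) * Complex.I) by
    unfold tau; congr 1; push_cast; ring]
  exact Complex.norm_exp_ofReal_mul_I _

lemma omg_pow_d (d : ℕ) (hd : d ≠ 0) : omg d ^ d = 1 := by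
  have hdc : (d : ℂ) ≠ 0 := Nat.cast_ne_zero.mpr hd
  rw [omg, ← Complex.exp_nat_mul,
    show (d : ℂ) * (2 * Real.pi * Complex.I / d) = 2 * Real.pi * Complex.I by field_simp]
  exact Complex.exp_two_pi_mul_I

lemma omg_pow_mod (m : ℕ) : omg d ^ m = omg d ^ (m % d) := by
  conv_lhs => rw [← Nat.div_add_mod m d]
  rw [pow_add, pow_mul, omg_pow_d d (NeZero.ne d), one_pow, one_mul]

lemma omg_pow_natCast (m : ℕ) : omg d ^ m = omgPow d (m : ZMod d) := by
  rw [omgPow, ZMod.val_natCast, ← omg_pow_mod]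

lemma omgPow_zero : omgPow d (0 : ZMod d) = 1 := by simp [omgPow, ZMod.val_zero]

lemma omgPow_add (a b : ZMod d) : omgPow d (a + b) = omgPow d a * omgPow d b := by
  rw [omgPow, ZMod.val_add, ← omg_pow_mod, pow_add]; rfl

lemma dotv_cast (p q : Fin n → ZMod d) : ((dotv p q : ℕ) : ZMod d) = ∑ i, p i * q i := by
  rw [dotv]; push_cast [ZMod.natCast_val, ZMod.cast_id]; rfl

lemma omg_pow_dotv (p q : Fin n → ZMod d) :
    omg d ^ dotv p q = omgPow d (∑ i, p i * q i) := by
  rw [omg_pow_natCast, dotv_cast]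

/-- `|e^{iθ} - 1| = 2 sin(θ/2)` for `θ ∈ [0, π]`. -/
lemma abs_exp_theta_sub_one (θ : ℝ) (h0 : 0 ≤ θ) (hπ : θ ≤ Real.pi) :
    ‖Complex.exp (θ * Complex.I) - 1‖ = 2 * Real.sin (θ / 2) := by
  have hre : (Complex.exp (θ * Complex.I) - 1).re = Real.cos θ - 1 := by
    simp [Complex.exp_ofReal_mul_I_re]
  have him : (Complex.exp (θ * Complex.I) - 1).im = Real.sin θ := by
    simp [Complex.exp_ofReal_mul_I_im]
  rw [Complex.norm_def, Complex.normSq_apply, hre, him]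
  have h1 : Real.cos (2 * (θ / 2)) = 2 * Real.cos (θ / 2) ^ 2 - 1 := Real.cos_two_mul _
  rw [show 2 * (θ / 2) = θ by ring] at h1
  have hkey : (Real.cos θ - 1) * (Real.cos θ - 1) + Real.sin θ * Real.sin θ
      = (2 * Real.sin (θ / 2)) ^ 2 := by
    nlinarith [Real.sin_sq_add_cos_sq (θ / 2), Real.sin_sq_add_cos_sq θ]
  have hnn : 0 ≤ Real.sin (θ / 2) :=
    Real.sin_nonneg_of_nonneg_of_le_pi (by linarith) (by nlinarith [Real.pi_pos])
  rw [hkey, Real.sqrt_sq (by linarith)]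

lemma omg_pow_eq_exp (d m : ℕ) :
    omg d ^ m = Complex.exp ((2 * Real.pi * m / d : ℝ) * Complex.I) := by
  rw [omg, ← Complex.exp_nat_mul]; congr 1; push_cast; ring

lemma bound_small (d m : ℕ) (hd : 0 < d) (h1 : 1 ≤ m) (h2 : 2 * m ≤ d) :
    4 / (d : ℝ) ≤ ‖omg d ^ m - 1‖ := by
  have hdr : (0:ℝ) < d := by exact_mod_cast hd
  have hmr : (1:ℝ) ≤ m := by exact_mod_cast h1
  have h2r : 2 * (m:ℝ) ≤ d := by exact_mod_cast h2
  have hpi := Real.pi_pos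
  set θ : ℝ := 2 * Real.pi * m / d with hθ
  have h0 : 0 ≤ θ := by positivity
  have hπ : θ ≤ Real.pi := by
    rw [hθ, div_le_iff₀ hdr]; nlinarith
  rw [omg_pow_eq_exp, abs_exp_theta_sub_one θ h0 hπ]
  have hhalf : θ / 2 ≤ Real.pi / 2 := by linarith
  have hsin := Real.mul_le_sin (x := θ / 2) (by linarith) hhalf
  have heq : 2 / Real.pi * (θ / 2) = 2 * m / d := by
    rw [hθ]; field_simp
  rw [heq] at hsin
  have h4 : (2:ℝ)/d ≤ 2*m/d := (div_le_div_iff_of_pos_right hdr).mpr (by linarith)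
  have h5 : (4:ℝ)/d = 2*(2/d) := by ring
  linarith

/-- `|ω^k - 1| ≥ 4/d` for `k ≠ 0` in `ZMod d`. -/
lemma omgPow_sub_one_bound (d : ℕ) [NeZero d] (hd : 2 ≤ d) (k : ZMod d) (hk : k ≠ 0) :
    4 / (d:ℝ) ≤ ‖omgPow d k - 1‖ := by
  have hd0 : 0 < d := by omega
  have hm1 : 1 ≤ k.val := Nat.one_le_iff_ne_zero.mpr (fun h => hk (by rwa [← ZMod.val_eq_zero]))
  have hmd : k.val < d := ZMod.val_lt k
  rw [omgPow]
  set m := k.val with hm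
  rcases le_or_gt (2*m) d with h | h
  · exact bound_small d m hd0 hm1 h
  · have habs : ‖omg d ^ m‖ = 1 := by rw [norm_pow, abs_omg, one_pow]
    have hmul : omg d ^ (d - m) * omg d ^ m = 1 := by
      rw [← pow_add, Nat.sub_add_cancel (le_of_lt hmd), omg_pow_d d (by omega)]
    have hconj : omg d ^ (d - m) = conj (omg d ^ m) := by
      rw [← Complex.inv_eq_conj habs]
      exact eq_inv_of_mul_eq_one_left hmul
    have hswap : ‖omg d ^ (d - m) - 1‖ = ‖omg d ^ m - 1‖ := by
      rw [hconj, show conj (omg d ^ m) - 1 = conj (omg d ^ m - 1) by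
        rw [map_sub, _root_.map_one], Complex.norm_conj]
    rw [← hswap]
    exact bound_small d (d - m) hd0 (by omega) (by omega)

/-- entries of a product of two Weyl operators -/
lemma weyl_mul_apply (x y : (Fin n → ZMod d) × (Fin n → ZMod d)) (a c : Fin n → ZMod d) :
    (Weyl d n x * Weyl d n y) a c =
      (tau d ^ (-(dotv x.1 x.2 : ℤ)) * tau d ^ (-(dotv y.1 y.2 : ℤ))) *
      omgPow d ((∑ i, x.1 i * a i) + ∑ i, y.1 i * (c i + y.2 i)) *
      (if a = c + y.2 + x.2 then 1 else 0) := by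
  rw [Matrix.mul_apply]
  rw [Finset.sum_eq_single (c + y.2)]
  · simp only [Weyl, Matrix.of_apply, if_pos rfl, mul_one]
    rw [omgPow_add, omg_pow_dotv, omg_pow_dotv]
    simp only [Pi.add_apply, mul_add, if_true, mul_one]
    ring
  · intro b _ hb
    simp only [Weyl, Matrix.of_apply, if_neg hb, mul_zero, zero_mul]
  · intro h; exact absurd (Finset.mem_univ _) h

/-- The Weyl commutation relation `W_x W_y = ω^{[x,y]} W_y W_x`. -/
lemma weyl_comm_rel (x y : (Fin n → ZMod d) × (Fin n → ZMod d)) :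
    Weyl d n x * Weyl d n y = omgPow d (symp x y) • (Weyl d n y * Weyl d n x) := by
  ext a c
  rw [Matrix.smul_apply, weyl_mul_apply, weyl_mul_apply, smul_eq_mul]
  have hcond : (a = c + y.2 + x.2) ↔ (a = c + x.2 + y.2) := by rw [add_right_comm]
  by_cases h : a = c + x.2 + y.2
  · rw [if_pos (hcond.mpr h), if_pos h, mul_one, mul_one]
    have hphase : ((∑ i, x.1 i * a i) + ∑ i, y.1 i * (c i + y.2 i))
        = symp x y + ((∑ i, y.1 i * a i) + ∑ i, x.1 i * (c i + x.2 i)) := by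
      subst h
      simp only [symp, Pi.add_apply, ← Finset.sum_add_distrib]
      exact Finset.sum_congr rfl fun i _ => by ring
    rw [hphase, omgPow_add]
    ring
  · rw [if_neg (fun hh => h (hcond.mp hh)), if_neg h, mul_zero, mul_zero, mul_zero]

lemma conj_mul_self_of_abs_one {z : ℂ} (h : ‖z‖ = 1) : conj z * z = 1 := by
  rw [mul_comm, Complex.mul_conj, Complex.normSq_eq_norm_sq, h]; norm_num

/-- Weyl operators are unitary. -/
lemma weyl_unitary (x : (Fin n → ZMod d) × (Fin n → ZMod d)) :
    (Weyl d n x)ᴴ * Weyl d n x = 1 := by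
  have habs : ∀ a : Fin n → ZMod d,
      ‖tau d ^ (-(dotv x.1 x.2 : ℤ)) * omg d ^ dotv x.1 a‖ = 1 := by
    intro a
    rw [norm_mul, norm_zpow, norm_pow, abs_tau, abs_omg, _root_.one_zpow, one_pow, one_mul]
  ext b c
  rw [Matrix.mul_apply, Finset.sum_eq_single (b + x.2)]
  · simp only [Matrix.conjTranspose_apply, Weyl, Matrix.of_apply, if_pos rfl, mul_one,
      Complex.star_def, add_left_inj, Matrix.one_apply, if_true]
    rw [← mul_assoc, conj_mul_self_of_abs_one (habs _), one_mul]
  · intro a _ ha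
    simp only [Matrix.conjTranspose_apply, Weyl, Matrix.of_apply, Complex.star_def]
    rw [if_neg ha]
    simp
  · intro h; exact absurd (Finset.mem_univ _) h

lemma dotc_eq_dot (φ ψ : (Fin n → ZMod d) → ℂ) : dotc φ ψ = dotProduct (star φ) ψ := by
  simp [dotc, dotProduct, Pi.star_apply, Complex.star_def]

lemma dotc_weyl_invariant (x : (Fin n → ZMod d) × (Fin n → ZMod d))
    (φ χ : (Fin n → ZMod d) → ℂ) :
    dotc ((Weyl d n x).mulVec φ) ((Weyl d n x).mulVec χ) = dotc φ χ := by
  rw [dotc_eq_dot, dotc_eq_dot, Matrix.star_mulVec, Matrix.dotProduct_mulVec,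
    Matrix.vecMul_vecMul, weyl_unitary, Matrix.vecMul_one]

lemma trace_outer_mul (ψ : (Fin n → ZMod d) → ℂ)
    (M : Matrix (Fin n → ZMod d) (Fin n → ZMod d) ℂ) :
    (outer d n ψ * M).trace = dotc ψ (M.mulVec ψ) := by
  simp only [Matrix.trace, Matrix.diag, Matrix.mul_apply, outer, Matrix.of_apply, dotc,
    Matrix.mulVec, dotProduct, Finset.mul_sum]
  rw [Finset.sum_comm]
  exact Finset.sum_congr rfl fun b _ => Finset.sum_congr rfl fun a _ => by ring

lemma dotc_add_right (φ a b : (Fin n → ZMod d) → ℂ) :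
    dotc φ (a + b) = dotc φ a + dotc φ b := by
  simp [dotc, mul_add, Finset.sum_add_distrib]

lemma dotc_smul_right (c : ℂ) (φ a : (Fin n → ZMod d) → ℂ) :
    dotc φ (c • a) = c * dotc φ a := by
  simp only [dotc, Pi.smul_apply, smul_eq_mul, Finset.mul_sum]
  exact Finset.sum_congr rfl fun i _ => by ring

/-- The corresponding element of Euclidean space. -/
def toE (f : (Fin n → ZMod d) → ℂ) : EuclideanSpace ℂ (Fin n → ZMod d) :=
  (WithLp.equiv 2 _).symm f

lemma inner_toE (φ ψ : (Fin n → ZMod d) → ℂ) :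
    (inner ℂ (toE φ) (toE ψ) : ℂ) = dotc φ ψ := by
  simp [toE, PiLp.inner_apply, RCLike.inner_apply, dotc]
  exact Finset.sum_congr rfl fun a _ => mul_comm _ _

lemma toE_sub (a b : (Fin n → ZMod d) → ℂ) : toE (a - b) = toE a - toE b := rfl
lemma toE_smul (c : ℂ) (a : (Fin n → ZMod d) → ℂ) : toE (c • a) = c • toE a := rfl

lemma norm_toE_sq (φ : (Fin n → ZMod d) → ℂ) : ‖toE φ‖ ^ 2 = (dotc φ φ).re := by
  rw [← inner_toE]
  exact (inner_self_eq_norm_sq (𝕜 := ℂ) _).symm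

lemma norm_toE_mulVec (x : (Fin n → ZMod d) × (Fin n → ZMod d)) (w : (Fin n → ZMod d) → ℂ) :
    ‖toE ((Weyl d n x).mulVec w)‖ = ‖toE w‖ := by
  rw [← Real.sqrt_sq (norm_nonneg (toE ((Weyl d n x).mulVec w))),
    ← Real.sqrt_sq (norm_nonneg (toE w)), norm_toE_sq, norm_toE_sq, dotc_weyl_invariant]

lemma key_norm {F : Type*} [NormedAddCommGroup F] [InnerProductSpace ℂ F]
    (ψ u : F) (hψ : ‖ψ‖ = 1) (hu : ‖u‖ = 1) (α : ℂ) (hα : (inner ℂ ψ u : ℂ) = α) :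
    ‖u - α • ψ‖ ^ 2 = 1 - ‖α‖ ^ 2 := by
  have h2 : (inner ℂ u ψ : ℂ) = conj α := by rw [← inner_conj_symm u ψ, hα]
  have h3 : α * conj α = ((‖α‖ ^ 2 : ℝ) : ℂ) := by
    rw [Complex.mul_conj, Complex.normSq_eq_norm_sq]
  rw [norm_sub_sq (𝕜 := ℂ), inner_smul_right, h2, norm_smul, hψ, hu, h3]
  simp [← Complex.ofReal_pow]
  ring

end S8
end

/-- Uncertainty relation for Weyl operators: with `δ = 1/(2d)`, if a pure state
`ψ` satisfies `|tr(ψ W_x)|² > 1 - δ²` and `|tr(ψ W_y)|² > 1 - δ²`, then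
`W_x` and `W_y` commute. -/
theorem stmt8 (d n : ℕ) [NeZero d] (hd : 2 ≤ d)
    (ψ : (Fin n → ZMod d) → ℂ) (hψ : dotc ψ ψ = 1)
    (x y : (Fin n → ZMod d) × (Fin n → ZMod d))
    (hx : 1 - (1 / (2 * (d : ℝ))) ^ 2 <
      ‖(outer d n ψ * Weyl d n x).trace‖ ^ 2)
    (hy : 1 - (1 / (2 * (d : ℝ))) ^ 2 <
      ‖(outer d n ψ * Weyl d n y).trace‖ ^ 2) :
    Commute (Weyl d n x) (Weyl d n y) := by
  classical
  rw [S8.trace_outer_mul] at hx hy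
  by_cases hk0 : symp x y = 0
  · show Weyl d n x * Weyl d n y = Weyl d n y * Weyl d n x
    rw [S8.weyl_comm_rel, hk0, S8.omgPow_zero, one_smul]
  exfalso
  have hd0 : (0:ℝ) < d := by positivity
  have hd2 : (2:ℝ) ≤ d := by exact_mod_cast hd
  set δ : ℝ := 1 / (2 * (d : ℝ)) with hδ
  have hδpos : 0 < δ := by rw [hδ]; positivity
  have hδ4 : δ ≤ 1/4 := by
    rw [hδ, div_le_div_iff₀ (by linarith) (by norm_num)]; linarith
  set Wx := Weyl d n x with hWx
  set Wy := Weyl d n y with hWy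
  set α := dotc ψ (Wx.mulVec ψ) with hαdef
  set β := dotc ψ (Wy.mulVec ψ) with hβdef
  set a := ‖α‖ with hadef
  set b := ‖β‖ with hbdef
  have ha0 : 0 ≤ a := norm_nonneg _
  have hb0 : 0 ≤ b := norm_nonneg _
  -- unit norms
  have hψn : ‖S8.toE ψ‖ = 1 := by
    rw [← Real.sqrt_sq (norm_nonneg (S8.toE ψ)), S8.norm_toE_sq, hψ]
    simp
  have hAn : ‖S8.toE (Wx.mulVec ψ)‖ = 1 := by
    rw [← Real.sqrt_sq (norm_nonneg (S8.toE (Wx.mulVec ψ))), S8.norm_toE_sq,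
      S8.dotc_weyl_invariant, hψ]
    simp
  have hBn : ‖S8.toE (Wy.mulVec ψ)‖ = 1 := by
    rw [← Real.sqrt_sq (norm_nonneg (S8.toE (Wy.mulVec ψ))), S8.norm_toE_sq,
      S8.dotc_weyl_invariant, hψ]
    simp
  -- residual vectors
  set u0 : (Fin n → ZMod d) → ℂ := Wx.mulVec ψ - α • ψ with hu0def
  set v0 : (Fin n → ZMod d) → ℂ := Wy.mulVec ψ - β • ψ with hv0def
  have hu0sq : ‖S8.toE u0‖ ^ 2 = 1 - a ^ 2 := by
    rw [hu0def, S8.toE_sub, S8.toE_smul]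
    exact S8.key_norm _ _ hψn hAn α (by rw [S8.inner_toE])
  have hv0sq : ‖S8.toE v0‖ ^ 2 = 1 - b ^ 2 := by
    rw [hv0def, S8.toE_sub, S8.toE_smul]
    exact S8.key_norm _ _ hψn hBn β (by rw [S8.inner_toE])
  have hu0lt : ‖S8.toE u0‖ < δ := by
    have h1 : ‖S8.toE u0‖ ^ 2 < δ ^ 2 := by rw [hu0sq]; linarith
    exact lt_of_pow_lt_pow_left₀ 2 (le_of_lt hδpos) h1
  have hv0lt : ‖S8.toE v0‖ < δ := by
    have h1 : ‖S8.toE v0‖ ^ 2 < δ ^ 2 := by rw [hv0sq]; linarith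
    exact lt_of_pow_lt_pow_left₀ 2 (le_of_lt hδpos) h1
  -- inner product expansions
  have hsplitY : Wy.mulVec ψ = β • ψ + v0 := by rw [hv0def]; abel
  have hsplitX : Wx.mulVec ψ = α • ψ + u0 := by rw [hu0def]; abel
  have hγx : dotc ψ ((Wx * Wy).mulVec ψ) = β * α + dotc ψ (Wx.mulVec v0) := by
    rw [← Matrix.mulVec_mulVec, hsplitY, Matrix.mulVec_add, Matrix.mulVec_smul,
      S8.dotc_add_right, S8.dotc_smul_right]
  have hγy : dotc ψ ((Wy * Wx).mulVec ψ) = α * β + dotc ψ (Wy.mulVec u0) := by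
    rw [← Matrix.mulVec_mulVec, hsplitX, Matrix.mulVec_add, Matrix.mulVec_smul,
      S8.dotc_add_right, S8.dotc_smul_right]
  -- error bounds
  have herr1 : ‖dotc ψ (Wx.mulVec v0)‖ < δ := by
    have h1 : ‖dotc ψ (Wx.mulVec v0)‖ ≤ ‖S8.toE v0‖ := by
      rw [← S8.inner_toE]
      calc ‖(inner ℂ (S8.toE ψ) (S8.toE (Wx.mulVec v0)) : ℂ)‖
          ≤ ‖S8.toE ψ‖ * ‖S8.toE (Wx.mulVec v0)‖ := norm_inner_le_norm _ _
        _ = ‖S8.toE v0‖ := by rw [hψn, one_mul, hWx, S8.norm_toE_mulVec]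
    linarith
  have herr2 : ‖dotc ψ (Wy.mulVec u0)‖ < δ := by
    have h1 : ‖dotc ψ (Wy.mulVec u0)‖ ≤ ‖S8.toE u0‖ := by
      rw [← S8.inner_toE]
      calc ‖(inner ℂ (S8.toE ψ) (S8.toE (Wy.mulVec u0)) : ℂ)‖
          ≤ ‖S8.toE ψ‖ * ‖S8.toE (Wy.mulVec u0)‖ := norm_inner_le_norm _ _
        _ = ‖S8.toE u0‖ := by rw [hψn, one_mul, hWy, S8.norm_toE_mulVec]
    linarith
  -- the commutation phase
  set γ := dotc ψ ((Wx * Wy).mulVec ψ) with hγdef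
  set γ' := dotc ψ ((Wy * Wx).mulVec ψ) with hγ'def
  set χ : ℂ := omgPow d (symp x y) with hχdef
  have hrel : γ = χ * γ' := by
    rw [hγdef, hγ'def, hWx, hWy, S8.weyl_comm_rel, Matrix.smul_mulVec,
      S8.dotc_smul_right]
  have hχbound : 4 / (d:ℝ) ≤ ‖χ - 1‖ :=
    S8.omgPow_sub_one_bound d hd _ hk0
  -- distance estimates
  have h5 : ‖γ - α * β‖ < δ := by
    rw [hγx, mul_comm β α, add_sub_cancel_left]
    exact herr1
  have h6 : ‖γ' - α * β‖ < δ := by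
    rw [hγy, add_sub_cancel_left]
    exact herr2
  -- lower bound on |αβ| and |γ'|
  have h1δ : 0 < 1 - δ ^ 2 := by nlinarith
  have hab : 1 - δ ^ 2 < a * b := by
    have hsq : (1 - δ ^ 2) * (1 - δ ^ 2) < a ^ 2 * b ^ 2 :=
      mul_lt_mul'' hx hy (le_of_lt h1δ) (le_of_lt h1δ)
    nlinarith [mul_nonneg ha0 hb0]
  have habμ : ‖α * β‖ = a * b := by rw [norm_mul]
  have hγ'lb : (1 - δ ^ 2) - δ < ‖γ'‖ := by
    have h7 : ‖α * β‖ - ‖γ'‖ ≤ ‖α * β - γ'‖ := by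
      exact norm_sub_norm_le _ _
    have h8 : ‖α * β - γ'‖ = ‖γ' - α * β‖ := by
      rw [norm_sub_rev]
    rw [habμ] at h7
    rw [h8] at h7
    linarith
  -- upper bound: |χ - 1| |γ'| = |γ - γ'| < 2δ
  have hub : ‖χ - 1‖ * ‖γ'‖ < 2 * δ := by
    have h9 : (χ - 1) * γ' = (γ - α * β) - (γ' - α * β) := by rw [hrel]; ring
    have h10 : ‖(γ - α * β) - (γ' - α * β)‖
        ≤ ‖γ - α * β‖ + ‖γ' - α * β‖ := by
      exact norm_sub_le _ _
    calc ‖χ - 1‖ * ‖γ'‖ = ‖(χ - 1) * γ'‖ := (norm_mul _ _).symm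
      _ = ‖(γ - α * β) - (γ' - α * β)‖ := by rw [h9]
      _ ≤ ‖γ - α * β‖ + ‖γ' - α * β‖ := h10
      _ < 2 * δ := by linarith
  -- contradiction
  have hlow : 4 / (d:ℝ) * ((1 - δ ^ 2) - δ) ≤ ‖χ - 1‖ * ‖γ'‖ := by
    apply mul_le_mul hχbound (le_of_lt hγ'lb) (by nlinarith) (norm_nonneg _)
  have hfin : 4 / (d:ℝ) * ((1 - δ ^ 2) - δ) < 2 * δ := lt_of_le_of_lt hlow hub
  have hq : (0:ℝ) < 4 / (d:ℝ) := by positivity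
  have hE : (11:ℝ)/16 ≤ (1 - δ ^ 2) - δ := by nlinarith [hδpos, hδ4]
  have h1 : 4/(d:ℝ) * (11/16) ≤ 4/(d:ℝ) * ((1 - δ ^ 2) - δ) :=
    mul_le_mul_of_nonneg_left hE (le_of_lt hq)
  have h2 : 4/(d:ℝ) * (11/16) < 2 * δ := lt_of_le_of_lt h1 hfin
  have h3 : 2 * δ = 1/(d:ℝ) := by rw [hδ]; field_simp
  rw [h3, show 4/(d:ℝ) * (11/16) = 11/4 * (1/(d:ℝ)) by ring] at h2
  have h4 : (0:ℝ) < 1/(d:ℝ) := by positivity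
  linarith
end

section
/- Let d ≥ 2 and s ≥ 1 with gcd(s,d) = 1. Then the operator V_s = d^{-n} Σ_{x ∈ Z_d^{2n}} (W_x ⊗ W_x^†)^{⊗s} on ((C^d)^{⊗n})^{⊗2s} is a Hermitian unitary, i.e. V_s = V_s^† and V_s^2 = I. -/
open scoped BigOperators ComplexConjugate
open Finset Matrix

/-- The operator `V_s = d^{-n} ∑_x (W_x ⊗ W_x†)^{⊗s}` on `((ℂ^d)^{⊗n})^{⊗2s}`,
where the tensor factor at position `j` carries `W_x` for even `j` and `W_x†`
for odd `j`. -/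
noncomputable def Vop (d n s : ℕ) [NeZero d] :
    Matrix (Fin (2 * s) → (Fin n → ZMod d)) (Fin (2 * s) → (Fin n → ZMod d)) ℂ :=
  ((d : ℂ) ^ n)⁻¹ • (∑ x : ((Fin n → ZMod d) × (Fin n → ZMod d)),
    Matrix.of fun a b => ∏ j : Fin (2 * s),
      if (j : ℕ) % 2 = 0 then Weyl d n x (a j) (b j) else (Weyl d n x)ᴴ (a j) (b j))

set_option linter.unusedSectionVars false

noncomputable section
namespace Stmt9Aux
variable (d n : ℕ) [NeZero d]

lemma omg_prim : IsPrimitiveRoot (omg d) d :=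
  Complex.isPrimitiveRoot_exp d (NeZero.ne d)
lemma omg_pow_d : omg d ^ d = 1 := (omg_prim d).pow_eq_one
lemma omg_ne_zero : omg d ≠ 0 := Complex.exp_ne_zero _
lemma omg_pow_mod (m : ℕ) : omg d ^ m = omg d ^ (m % d) := by
  conv_lhs => rw [← Nat.mod_add_div m d, pow_add, pow_mul, omg_pow_d, one_pow, mul_one]
lemma omgPow_natCast (m : ℕ) : omgPow d (m : ZMod d) = omg d ^ m := by
  rw [omgPow, ZMod.val_natCast, ← omg_pow_mod]
lemma omgPow_zero : omgPow d 0 = 1 := by simp [omgPow, ZMod.val_zero]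
lemma natCast_val_self (x : ZMod d) : ((x.val : ℕ) : ZMod d) = x := by
  simp [ZMod.natCast_val, ZMod.cast_id]
lemma omgPow_add (x y : ZMod d) : omgPow d (x + y) = omgPow d x * omgPow d y := by
  have h : x + y = ((x.val + y.val : ℕ) : ZMod d) := by push_cast [natCast_val_self]; ring
  rw [h, omgPow_natCast, pow_add, omgPow, omgPow]
lemma omgPow_sum {ι : Type*} (t : Finset ι) (f : ι → ZMod d) :
    omgPow d (∑ j ∈ t, f j) = ∏ j ∈ t, omgPow d (f j) := by
  classical
  induction t using Finset.cons_induction with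
  | empty => simp [omgPow_zero]
  | cons j t hj ih => rw [Finset.sum_cons, Finset.prod_cons, omgPow_add, ih]
lemma conj_omg : conj (omg d) = (omg d)⁻¹ := by
  rw [omg, ← Complex.exp_conj, ← Complex.exp_neg]
  congr 1
  have : conj (2 * (Real.pi:ℂ) * Complex.I / d) = -(2 * (Real.pi:ℂ) * Complex.I / d) := by
    simp [map_div₀, Complex.conj_I, map_ofNat]
    ring
  simpa using this
lemma conj_tau : conj (tau d) = (tau d)⁻¹ := by
  rw [tau, ← Complex.exp_conj, ← Complex.exp_neg]
  congr 1
  have : conj ((Real.pi:ℂ) * Complex.I * (d^2+1) / d) = -((Real.pi:ℂ) * Complex.I * (d^2+1) / d) := by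
    simp [map_div₀, Complex.conj_I, map_ofNat]
    ring
  simpa using this
lemma tau_ne_zero : tau d ≠ 0 := Complex.exp_ne_zero _
lemma conj_omgPow (c : ZMod d) : conj (omgPow d c) = omgPow d (-c) := by
  have h2 : omgPow d (-c) = (omgPow d c)⁻¹ :=
    eq_inv_of_mul_eq_one_left (by rw [← omgPow_add, neg_add_cancel, omgPow_zero])
  rw [h2, omgPow, map_pow, conj_omg, inv_pow]

lemma char_sum (c : ZMod d) : ∑ k : ZMod d, omgPow d (k * c) = if c = 0 then (d:ℂ) else 0 := by
  by_cases hc : c = 0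
  · simp [hc, omgPow_zero, ZMod.card]
  · rw [if_neg hc]
    have key : ∀ k : ZMod d, omgPow d (k * c) = (omg d ^ c.val) ^ k.val := by
      intro k
      have h : k * c = ((k.val * c.val : ℕ) : ZMod d) := by push_cast [natCast_val_self]; ring
      rw [h, omgPow_natCast, mul_comm, pow_mul]
    simp_rw [key]
    have hbij : ∑ k : ZMod d, (omg d ^ c.val) ^ k.val = ∑ m ∈ Finset.range d, (omg d ^ c.val) ^ m := by
      exact Finset.sum_nbij' (i := fun k => k.val) (j := fun m => (m : ZMod d))
        (fun k _ => Finset.mem_range.2 (ZMod.val_lt k)) (fun m _ => Finset.mem_univ _)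
        (fun k _ => natCast_val_self d k)
        (fun m hm => ZMod.val_natCast_of_lt (Finset.mem_range.1 hm)) (fun k _ => rfl)
    rw [hbij, geom_sum_eq, ← pow_mul, mul_comm (c.val) d, pow_mul, omg_pow_d, one_pow,
      sub_self, zero_div]
    intro h1
    have := ((omg_prim d).pow_eq_one_iff_dvd c.val).1 h1
    have hlt := ZMod.val_lt c
    have hne : c.val ≠ 0 := fun h0 => hc (by rw [← natCast_val_self d c, h0, Nat.cast_zero])
    exact absurd (Nat.le_of_dvd (Nat.pos_of_ne_zero hne) this) (by omega)
end Stmt9Aux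
variable {d n : ℕ} [NeZero d]

def evens (N : ℕ) : Finset (Fin N) := Finset.univ.filter (fun j => (j:ℕ) % 2 = 0)
def odds (N : ℕ) : Finset (Fin N) := Finset.univ.filter (fun j => ¬ ((j:ℕ) % 2 = 0))

lemma card_evens (s : ℕ) : (evens (2*s)).card = s := by
  rw [evens, Finset.card_filter]
  rw [Fin.sum_univ_eq_sum_range (fun m => if m % 2 = 0 then 1 else 0) (2*s)]
  induction s with
  | zero => simp
  | succ t ih =>
      have h2 : 2 * (t+1) = (2*t) + 1 + 1 := by ring
      rw [h2, Finset.sum_range_succ, Finset.sum_range_succ, ih]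
      have e1 : (2*t) % 2 = 0 := by omega
      have e2 : (2*t+1) % 2 = 1 := by omega
      simp [e1, e2]

lemma card_odds (s : ℕ) : (odds (2*s)).card = s := by
  have h := Finset.card_filter_add_card_filter_not
    (s := (Finset.univ : Finset (Fin (2*s)))) (p := fun j => (j:ℕ) % 2 = 0)
  rw [Finset.card_univ, Fintype.card_fin] at h
  have he := card_evens s
  rw [evens] at he
  rw [odds]
  omega

def dz (p u : Fin n → ZMod d) : ZMod d := ∑ i, p i * u i

lemma dotv_cast (p u : Fin n → ZMod d) : ((dotv p u : ℕ) : ZMod d) = dz p u := by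
  rw [dotv, dz]
  push_cast [Stmt9Aux.natCast_val_self]
  rfl

lemma dz_sum_right {ι : Type*} (t : Finset ι) (p : Fin n → ZMod d) (f : ι → Fin n → ZMod d) :
    dz p (∑ j ∈ t, f j) = ∑ j ∈ t, dz p (f j) := by
  simp only [dz, Finset.sum_apply, Finset.mul_sum]
  exact Finset.sum_comm

lemma dz_sub (p u v : Fin n → ZMod d) : dz p (u - v) = dz p u - dz p v := by
  simp [dz, Pi.sub_apply, mul_sub, Finset.sum_sub_distrib]

namespace Stmt9Aux

lemma weyl_apply (x : (Fin n → ZMod d) × (Fin n → ZMod d)) (u v : Fin n → ZMod d) :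
    Weyl d n x u v = tau d ^ (-(dotv x.1 x.2 : ℤ)) * omgPow d (dz x.1 u) *
      (if u = v + x.2 then 1 else 0) := by
  rw [Weyl, Matrix.of_apply, ← dotv_cast, omgPow_natCast]

lemma weylH_apply (x : (Fin n → ZMod d) × (Fin n → ZMod d)) (u v : Fin n → ZMod d) :
    (Weyl d n x)ᴴ u v = tau d ^ ((dotv x.1 x.2 : ℤ)) * omgPow d (-(dz x.1 v)) *
      (if v = u + x.2 then 1 else 0) := by
  rw [Matrix.conjTranspose_apply, weyl_apply]
  rw [show ∀ z : ℂ, star z = conj z from fun _ => rfl]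
  rw [_root_.map_mul, _root_.map_mul, map_zpow₀, conj_tau, conj_omgPow]
  rw [show (tau d)⁻¹ ^ (-(dotv x.1 x.2:ℤ)) = tau d ^ ((dotv x.1 x.2:ℤ)) by
    rw [_root_.inv_zpow, ← _root_.zpow_neg, neg_neg]]
  congr 1
  split_ifs <;> simp

end Stmt9Aux
namespace Stmt9Aux
variable {d n : ℕ} [NeZero d]

def Se (s : ℕ) (a : Fin (2*s) → Fin n → ZMod d) : Fin n → ZMod d := ∑ j ∈ evens (2*s), a j
def So (s : ℕ) (a : Fin (2*s) → Fin n → ZMod d) : Fin n → ZMod d := ∑ j ∈ odds (2*s), a j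

lemma prod_entry (s : ℕ) (a b : Fin (2*s) → Fin n → ZMod d) (p q : Fin n → ZMod d) :
    (∏ j : Fin (2*s), if (j:ℕ) % 2 = 0 then Weyl d n (p,q) (a j) (b j)
      else (Weyl d n (p,q))ᴴ (a j) (b j))
    = if (∀ j ∈ evens (2*s), a j = b j + q) ∧ (∀ j ∈ odds (2*s), b j = a j + q) then
        omgPow d (dz p (Se s a - So s b)) else 0 := by
  classical
  rw [Finset.prod_ite]
  have he : (∏ j ∈ evens (2*s), Weyl d n (p,q) (a j) (b j))
      = (tau d ^ (-(dotv p q:ℤ)))^s * omgPow d (dz p (Se s a)) *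
        (if ∀ j ∈ evens (2*s), a j = b j + q then 1 else 0) := by
    simp_rw [weyl_apply]
    rw [Finset.prod_mul_distrib, Finset.prod_mul_distrib, Finset.prod_const, card_evens,
      Finset.prod_boole]
    congr 2
    rw [← omgPow_sum, ← dz_sum_right, Se]
  have ho : (∏ j ∈ Finset.univ.filter (fun j : Fin (2*s) => ¬ ((j:ℕ) % 2 = 0)),
        (Weyl d n (p,q))ᴴ (a j) (b j))
      = (tau d ^ ((dotv p q:ℤ)))^s * omgPow d (-(dz p (So s b))) *
        (if ∀ j ∈ odds (2*s), b j = a j + q then 1 else 0) := by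
    simp_rw [weylH_apply]
    rw [show (Finset.univ.filter (fun j : Fin (2*s) => ¬ ((j:ℕ) % 2 = 0))) = odds (2*s) from rfl]
    rw [Finset.prod_mul_distrib, Finset.prod_mul_distrib, Finset.prod_const, card_odds,
      Finset.prod_boole]
    congr 2
    rw [← omgPow_sum]
    congr 1
    rw [So, dz_sum_right, ← Finset.sum_neg_distrib]
  rw [show (Finset.univ.filter (fun j : Fin (2*s) => ((j:ℕ) % 2 = 0))) = evens (2*s) from rfl] at *
  rw [he, ho]
  have hτ : (tau d ^ (-(dotv p q:ℤ)))^s * (tau d ^ ((dotv p q:ℤ)))^s = 1 := by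
    rw [← mul_pow, ← zpow_add₀ (tau_ne_zero d), neg_add_cancel, zpow_zero, one_pow]
  have hP : omgPow d (dz p (Se s a)) * omgPow d (-(dz p (So s b)))
      = omgPow d (dz p (Se s a - So s b)) := by
    rw [← omgPow_add, dz_sub, sub_eq_add_neg]
  by_cases h1 : ∀ j ∈ evens (2*s), a j = b j + q
  · by_cases h2 : ∀ j ∈ odds (2*s), b j = a j + q
    · rw [if_pos h1, if_pos h2, if_pos ⟨h1,h2⟩, mul_one, mul_one, mul_mul_mul_comm, hτ,
        one_mul, hP]
    · rw [if_neg h2, if_neg (show ¬((∀ j ∈ evens (2*s), a j = b j + q) ∧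
          (∀ j ∈ odds (2*s), b j = a j + q)) from fun h => h2 h.2)]
      ring
  · rw [if_neg h1, if_neg (show ¬((∀ j ∈ evens (2*s), a j = b j + q) ∧
        (∀ j ∈ odds (2*s), b j = a j + q)) from fun h => h1 h.1)]
    ring

lemma sum_char_vec (c : Fin n → ZMod d) :
    ∑ p : Fin n → ZMod d, omgPow d (dz p c) = if c = 0 then ((d:ℂ))^n else 0 := by
  classical
  have h1 : ∀ p : Fin n → ZMod d, omgPow d (dz p c) = ∏ i, omgPow d (p i * c i) :=
    fun p => omgPow_sum d Finset.univ _
  simp_rw [h1]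
  rw [← Fintype.piFinset_univ, Finset.sum_prod_piFinset Finset.univ (fun i k => omgPow d (k * c i))]
  simp_rw [char_sum]
  by_cases hc : c = 0
  · simp [hc]
  · rw [if_neg hc]
    obtain ⟨i, hi⟩ : ∃ i, c i ≠ 0 := by
      by_contra h; push_neg at h; exact hc (funext h)
    exact Finset.prod_eq_zero (Finset.mem_univ i) (by simp [hi])

end Stmt9Aux
namespace Stmt9Aux
variable {d n : ℕ} [NeZero d]

def qq (s : ℕ) (a : Fin (2*s) → Fin n → ZMod d) : Fin n → ZMod d :=
  fun i => ((s : ZMod d))⁻¹ * (Se s a i - So s a i)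

def sig (s : ℕ) (a : Fin (2*s) → Fin n → ZMod d) : Fin (2*s) → Fin n → ZMod d :=
  fun j => if (j:ℕ) % 2 = 0 then a j - qq s a else a j + qq s a

variable {s : ℕ}

lemma hinv' (hcop : Nat.Coprime s d) : ((s : ZMod d))⁻¹ * (s : ZMod d) = 1 := by
  rw [mul_comm]; exact ZMod.coe_mul_inv_eq_one s hcop

lemma cond_iff (hcop : Nat.Coprime s d) (a b : Fin (2*s) → Fin n → ZMod d)
    (q : Fin n → ZMod d) :
    ((∀ j ∈ evens (2*s), a j = b j + q) ∧ (∀ j ∈ odds (2*s), b j = a j + q)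
       ∧ Se s a = So s b)
    ↔ (q = qq s a ∧ b = sig s a) := by
  constructor
  · rintro ⟨he, ho, hw⟩
    have hSo : So s b = So s a + s • q := by
      rw [So, Finset.sum_congr rfl ho, Finset.sum_add_distrib, Finset.sum_const, card_odds]
      rfl
    have hq : q = qq s a := by
      funext i
      have h1 : Se s a i = So s a i + (s:ZMod d) * q i := by
        rw [hw, hSo]
        simp [nsmul_eq_mul]
      show q i = (s:ZMod d)⁻¹ * (Se s a i - So s a i)
      rw [h1, add_sub_cancel_left, ← mul_assoc, hinv' hcop, one_mul]
    refine ⟨hq, ?_⟩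
    funext j
    by_cases hj : (j:ℕ) % 2 = 0
    · have hje : j ∈ evens (2*s) := Finset.mem_filter.mpr ⟨Finset.mem_univ _, hj⟩
      rw [sig, if_pos hj, ← hq, he j hje, add_sub_cancel_right]
    · have hjo : j ∈ odds (2*s) := Finset.mem_filter.mpr ⟨Finset.mem_univ _, hj⟩
      rw [sig, if_neg hj, ← hq, ho j hjo]
  · rintro ⟨hq, hb⟩
    refine ⟨?_, ?_, ?_⟩
    · intro j hj
      have hj2 := (Finset.mem_filter.mp hj).2
      rw [hb, hq, sig, if_pos hj2, sub_add_cancel]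
    · intro j hj
      have hj2 := (Finset.mem_filter.mp hj).2
      rw [hb, hq, sig, if_neg hj2]
    · have hSo : So s (sig s a) = So s a + s • qq s a := by
        rw [So, So]
        rw [Finset.sum_congr rfl (fun j hj => by
          rw [sig, if_neg (Finset.mem_filter.mp hj).2])]
        rw [Finset.sum_add_distrib, Finset.sum_const, card_odds]
      rw [hb, hSo]
      funext i
      show Se s a i = So s a i + (s • qq s a) i
      have : (s • qq s a) i = (s:ZMod d) * ((s:ZMod d)⁻¹ * (Se s a i - So s a i)) := by
        simp [qq, nsmul_eq_mul]
      rw [this, ← mul_assoc, ZMod.coe_mul_inv_eq_one s hcop, one_mul]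
      ring

lemma Vop_apply (hcop : Nat.Coprime s d) (a b : Fin (2*s) → Fin n → ZMod d) :
    Vop d n s a b = if b = sig s a then 1 else 0 := by
  classical
  rw [Vop, Matrix.smul_apply, Matrix.sum_apply]
  simp only [Matrix.of_apply]
  rw [Fintype.sum_prod_type]
  simp_rw [prod_entry]
  rw [Finset.sum_comm]
  have step : ∀ q : Fin n → ZMod d,
      (∑ p : Fin n → ZMod d, if (∀ j ∈ evens (2*s), a j = b j + q) ∧
          (∀ j ∈ odds (2*s), b j = a j + q) then omgPow d (dz p (Se s a - So s b)) else 0)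
      = if ((∀ j ∈ evens (2*s), a j = b j + q) ∧ (∀ j ∈ odds (2*s), b j = a j + q))
          ∧ Se s a = So s b then (d:ℂ)^n else 0 := by
    intro q
    by_cases hC : (∀ j ∈ evens (2*s), a j = b j + q) ∧ (∀ j ∈ odds (2*s), b j = a j + q)
    · have hrw : ((((∀ j ∈ evens (2*s), a j = b j + q) ∧ (∀ j ∈ odds (2*s), b j = a j + q))
          ∧ Se s a = So s b)) ↔ (Se s a = So s b) := by tauto
      simp only [if_pos hC, sum_char_vec, sub_eq_zero, hrw]
    · simp [hC]
  simp_rw [step]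
  have hiff : ∀ q : Fin n → ZMod d,
      (((∀ j ∈ evens (2*s), a j = b j + q) ∧ (∀ j ∈ odds (2*s), b j = a j + q))
          ∧ Se s a = So s b) ↔ (q = qq s a ∧ b = sig s a) := by
    intro q
    rw [← cond_iff hcop a b q]
    tauto
  simp_rw [hiff, ite_and]
  rw [Finset.sum_ite_eq' Finset.univ (qq s a)
    (fun _ => if b = sig s a then ((d:ℂ))^n else 0)]
  rw [if_pos (Finset.mem_univ _)]
  have hdn : ((d:ℂ))^n ≠ 0 := pow_ne_zero _ (Nat.cast_ne_zero.mpr (NeZero.ne d))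
  split_ifs
  · rw [smul_eq_mul, inv_mul_cancel₀ hdn]
  · rw [smul_eq_mul, mul_zero]

lemma qq_sig (hcop : Nat.Coprime s d) (a : Fin (2*s) → Fin n → ZMod d) :
    qq s (sig s a) = - qq s a := by
  have hSe : Se s (sig s a) = Se s a - s • qq s a := by
    rw [Se, Se, Finset.sum_congr rfl (fun j hj => by
      rw [sig, if_pos (Finset.mem_filter.mp hj).2])]
    rw [Finset.sum_sub_distrib, Finset.sum_const, card_evens]
  have hSo : So s (sig s a) = So s a + s • qq s a := by
    rw [So, So, Finset.sum_congr rfl (fun j hj => by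
      rw [sig, if_neg (Finset.mem_filter.mp hj).2])]
    rw [Finset.sum_add_distrib, Finset.sum_const, card_odds]
  funext i
  show (s:ZMod d)⁻¹ * (Se s (sig s a) i - So s (sig s a) i) = -((s:ZMod d)⁻¹ * (Se s a i - So s a i))
  rw [hSe, hSo]
  have h1 : (Se s a - s • qq s a) i = Se s a i - (s:ZMod d) * ((s:ZMod d)⁻¹ * (Se s a i - So s a i)) := by
    simp [qq, nsmul_eq_mul]
  have h2 : (So s a + s • qq s a) i = So s a i + (s:ZMod d) * ((s:ZMod d)⁻¹ * (Se s a i - So s a i)) := by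
    simp [qq, nsmul_eq_mul]
  rw [h1, h2]
  have htw : (s : ZMod d) * ((s:ZMod d))⁻¹ = 1 := ZMod.coe_mul_inv_eq_one s hcop
  set t := (s : ZMod d)
  set w := (t)⁻¹
  set u := Se s a i
  set v := So s a i
  linear_combination (-2*w*(u-v)) * htw

lemma sig_sig (hcop : Nat.Coprime s d) (a : Fin (2*s) → Fin n → ZMod d) :
    sig s (sig s a) = a := by
  funext j
  by_cases hj : (j:ℕ) % 2 = 0
  · rw [sig, if_pos hj, qq_sig hcop, sig, if_pos hj, sub_neg_eq_add, sub_add_cancel]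
  · rw [sig, if_neg hj, qq_sig hcop, sig, if_neg hj, add_neg_cancel_right]

end Stmt9Aux

end

/-- For `d ≥ 2` and `s ≥ 1` with `gcd(s,d) = 1`, the operator
`V_s = d^{-n} ∑_x (W_x ⊗ W_x†)^{⊗s}` is a Hermitian unitary. -/
theorem stmt9 (d n s : ℕ) [NeZero d] (hd : 2 ≤ d) (hs : 1 ≤ s)
    (hcop : Nat.Coprime s d) :
    (Vop d n s).IsHermitian ∧ Vop d n s * Vop d n s = 1 := by
  classical
  constructor
  · ext a b
    rw [Matrix.conjTranspose_apply, Stmt9Aux.Vop_apply hcop, Stmt9Aux.Vop_apply hcop]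
    rw [show ∀ z : ℂ, star z = conj z from fun _ => rfl]
    have hab : a = Stmt9Aux.sig s b ↔ b = Stmt9Aux.sig s a := by
      constructor
      · intro h; rw [h, Stmt9Aux.sig_sig hcop]
      · intro h; rw [h, Stmt9Aux.sig_sig hcop]
    rw [show (if a = Stmt9Aux.sig s b then (1:ℂ) else 0) = (if b = Stmt9Aux.sig s a then (1:ℂ) else 0) by
      simp only [hab]]
    split_ifs <;> simp
  · ext a c
    rw [Matrix.mul_apply]
    simp_rw [Stmt9Aux.Vop_apply hcop]
    rw [Finset.sum_congr rfl (fun b _ => by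
      rw [ite_mul, one_mul, zero_mul] : ∀ b ∈ Finset.univ, _ = _)]
    rw [Finset.sum_ite_eq' Finset.univ (Stmt9Aux.sig s a)
      (fun b => if c = Stmt9Aux.sig s b then (1:ℂ) else 0)]
    rw [if_pos (Finset.mem_univ _), Stmt9Aux.sig_sig hcop, Matrix.one_apply]
    by_cases h : c = a
    · rw [if_pos h, if_pos h.symm]
    · rw [if_neg h, if_neg (fun h' => h h'.symm)]
end

section
/- Let ψ be a pure state of n qubits with characteristic distribution p_ψ(a) = 2^{-n} |tr(ψ W_a)|^2. Then the symplectic Fourier transform of p_ψ equals p_ψ itself: 2^{-n} Σ_x (-1)^{[a,x]} p_ψ(x) = p_ψ(a) for all a ∈ Z_2^{2n}. -/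
open scoped BigOperators ComplexConjugate
open Finset Matrix

noncomputable section

noncomputable section AuxStmt10

namespace AuxStmt10

/-- The sign character on `ZMod 2`. -/
def eps (k : ZMod 2) : ℂ := (-1) ^ k.val

lemma eps_add (j k : ZMod 2) : eps (j + k) = eps j * eps k := by
  rw [eps, eps, eps, ZMod.val_add, ← neg_one_pow_eq_pow_mod_two, pow_add]

lemma eps_natCast (m : ℕ) : eps ((m : ZMod 2)) = (-1:ℂ)^m := by
  rw [eps, ZMod.val_natCast, ← neg_one_pow_eq_pow_mod_two]

lemma eps_zero : eps 0 = 1 := by norm_num [eps, show ZMod.val (0:ZMod 2) = 0 from rfl]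

lemma conj_eps (k : ZMod 2) : conj (eps k) = eps k := by
  simp [eps, map_pow]

lemma eps_sum {ι : Type*} (s : Finset ι) (f : ι → ZMod 2) :
    eps (∑ i ∈ s, f i) = ∏ i ∈ s, eps (f i) := by
  induction s using Finset.cons_induction with
  | empty => simp [eps_zero]
  | cons i s hi ih => simp [Finset.sum_cons, Finset.prod_cons, eps_add, ih]

/-- Dot product over `ZMod 2`. -/
def sdot {n : ℕ} (p q : Fin n → ZMod 2) : ZMod 2 := ∑ i, p i * q i

lemma sdot_comm {n : ℕ} (p q : Fin n → ZMod 2) : sdot p q = sdot q p := by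
  simp [sdot, mul_comm]

lemma sdot_add_right {n : ℕ} (p b c : Fin n → ZMod 2) :
    sdot p (b + c) = sdot p b + sdot p c := by
  simp [sdot, Pi.add_apply, mul_add, Finset.sum_add_distrib]

lemma cast_dotv {n : ℕ} (p q : Fin n → ZMod 2) : ((dotv p q : ℕ) : ZMod 2) = sdot p q := by
  simp only [dotv, sdot, Nat.cast_sum, Nat.cast_mul, ZMod.natCast_val, ZMod.cast_id]

lemma sum_eps_single (v : ZMod 2) : ∑ c : ZMod 2, eps (c * v) = if v = 0 then 2 else 0 := by
  rw [show (Finset.univ : Finset (ZMod 2)) = {0, 1} from by decide]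
  obtain rfl | rfl : v = 0 ∨ v = 1 := by revert v; decide
  all_goals simp [eps_zero]
  all_goals norm_num [eps, show ZMod.val (1:ZMod 2) = 1 from rfl]

lemma sum_eps {n : ℕ} (u : Fin n → ZMod 2) :
    ∑ p : Fin n → ZMod 2, eps (sdot p u) = if u = 0 then (2:ℂ)^n else 0 := by
  have h1 : ∀ p : Fin n → ZMod 2, eps (sdot p u) = ∏ i, eps (p i * u i) := fun p =>
    eps_sum _ _
  simp only [h1]
  rw [← Fintype.prod_sum (fun (i : Fin n) (c : ZMod 2) => eps (c * u i))]
  simp only [sum_eps_single]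
  by_cases hu : u = 0
  · simp [hu, Finset.prod_const]
  · have : ∃ i, u i ≠ 0 := by
      by_contra h; push_neg at h; exact hu (funext h)
    obtain ⟨i, hi⟩ := this
    rw [if_neg hu]
    exact Finset.prod_eq_zero (Finset.mem_univ i) (by simp [hi])

lemma omg_two : omg 2 = -1 := by
  rw [omg]
  rw [show (2 * (Real.pi:ℂ) * Complex.I / (2:ℕ)) = Real.pi * Complex.I by push_cast; ring]
  exact Complex.exp_pi_mul_I

lemma abs_tau_two : ‖tau 2‖ = 1 := by
  rw [tau, Complex.norm_exp]
  norm_num [Complex.mul_re, Complex.div_re, Complex.mul_im, Complex.normSq]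

lemma symp_eq {n : ℕ} (x y : (Fin n → ZMod 2) × (Fin n → ZMod 2)) :
    symp x y = sdot x.1 y.2 + sdot x.2 y.1 := by
  simp only [symp, sdot, CharTwo.sub_eq_add, Finset.sum_add_distrib]

lemma vadd_self {n : ℕ} (v : Fin n → ZMod 2) : v + v = 0 := by
  funext i; exact CharTwo.add_self_eq_zero _

lemma vadd_cancel {n : ℕ} (u v : Fin n → ZMod 2) : u + (u + v) = v := by
  rw [← add_assoc, vadd_self, zero_add]

/-- The (unnormalized, phase-stripped) characteristic function. -/
def Sfun {n : ℕ} (ψ : (Fin n → ZMod 2) → ℂ)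
    (x : (Fin n → ZMod 2) × (Fin n → ZMod 2)) : ℂ :=
  ∑ b, eps (sdot x.1 b) * (ψ (b + x.2) * conj (ψ b))

lemma trace_eq {n : ℕ} (ψ : (Fin n → ZMod 2) → ℂ)
    (x : (Fin n → ZMod 2) × (Fin n → ZMod 2)) :
    (Weyl 2 n x * outer 2 n ψ).trace = tau 2 ^ (-(dotv x.1 x.2 : ℤ)) * Sfun ψ x := by
  have hcond : ∀ a b : Fin n → ZMod 2, (a = b + x.2) ↔ (b = a + x.2) := by
    intro a b
    constructor
    · rintro rfl; rw [add_assoc, vadd_self, add_zero]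
    · rintro rfl; rw [add_assoc, vadd_self, add_zero]
  simp only [Matrix.trace, Matrix.diag, Matrix.mul_apply, Weyl, outer, Matrix.of_apply]
  rw [Sfun, Finset.mul_sum]
  refine Finset.sum_congr rfl fun a _ => ?_
  simp only [hcond, mul_ite, ite_mul, mul_one, mul_zero, zero_mul, one_mul]
  rw [Finset.sum_ite_eq' Finset.univ (a + x.2)
    (fun b => tau 2 ^ (-(dotv x.1 x.2 : ℤ)) * omg 2 ^ dotv x.1 a * (ψ b * conj (ψ a)))]
  simp only [Finset.mem_univ, if_true]
  have : (omg 2) ^ dotv x.1 a = eps (sdot x.1 a) := by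
    rw [omg_two, ← cast_dotv, eps_natCast]
  rw [this]
  ring

lemma pdist_eq {n : ℕ} (ψ : (Fin n → ZMod 2) → ℂ)
    (x : (Fin n → ZMod 2) × (Fin n → ZMod 2)) :
    pdist 2 n ψ x = ((2:ℝ)^n)⁻¹ * Complex.normSq (Sfun ψ x) := by
  rw [pdist, trace_eq, norm_mul, norm_zpow, abs_tau_two, _root_.one_zpow, one_mul,
    Complex.sq_norm]
  norm_num

lemma key {n : ℕ} (ψ : (Fin n → ZMod 2) → ℂ) (a : (Fin n → ZMod 2) × (Fin n → ZMod 2)) :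
    ∑ x : (Fin n → ZMod 2) × (Fin n → ZMod 2),
      eps (symp a x) * (Sfun ψ x * conj (Sfun ψ x))
      = 2^n * (Sfun ψ a * conj (Sfun ψ a)) := by
  classical
  have hconjS : ∀ x : (Fin n → ZMod 2) × (Fin n → ZMod 2), conj (Sfun ψ x)
      = ∑ c, eps (sdot x.1 c) * (conj (ψ (c + x.2)) * ψ c) := by
    intro x
    rw [Sfun, map_sum]
    refine Finset.sum_congr rfl fun c _ => ?_
    rw [_root_.map_mul, _root_.map_mul, conj_eps, Complex.conj_conj]
  have hprod : ∀ x : (Fin n → ZMod 2) × (Fin n → ZMod 2), Sfun ψ x * conj (Sfun ψ x)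
      = ∑ b, ∑ c, (eps (sdot x.1 b) * eps (sdot x.1 c)) *
          ((ψ (b + x.2) * conj (ψ b)) * (conj (ψ (c + x.2)) * ψ c)) := by
    intro x
    rw [hconjS, Sfun, Finset.sum_mul_sum]
    exact Finset.sum_congr rfl fun b _ => Finset.sum_congr rfl fun c _ => by ring
  calc ∑ x : (Fin n → ZMod 2) × (Fin n → ZMod 2),
        eps (symp a x) * (Sfun ψ x * conj (Sfun ψ x))
      = ∑ p : Fin n → ZMod 2, ∑ q : Fin n → ZMod 2, ∑ b : Fin n → ZMod 2,
          ∑ c : Fin n → ZMod 2,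
          eps (sdot p (a.2 + (b + c))) *
            (eps (sdot a.1 q) * ((ψ (b + q) * conj (ψ b)) * (conj (ψ (c + q)) * ψ c))) := by
        rw [Fintype.sum_prod_type]
        refine Finset.sum_congr rfl fun p _ => Finset.sum_congr rfl fun q _ => ?_
        rw [hprod, Finset.mul_sum]
        refine Finset.sum_congr rfl fun b _ => ?_
        rw [Finset.mul_sum]
        refine Finset.sum_congr rfl fun c _ => ?_
        have h1 : symp a (p, q) = sdot a.1 q + sdot p a.2 := by
          rw [symp_eq]; exact congrArg _ (sdot_comm a.2 p)
        rw [h1, eps_add, sdot_add_right, sdot_add_right, eps_add, eps_add]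
        ring
    _ = ∑ q : Fin n → ZMod 2, ∑ b : Fin n → ZMod 2, ∑ c : Fin n → ZMod 2,
          (∑ p : Fin n → ZMod 2, eps (sdot p (a.2 + (b + c)))) *
            (eps (sdot a.1 q) * ((ψ (b + q) * conj (ψ b)) * (conj (ψ (c + q)) * ψ c))) := by
        rw [Finset.sum_comm]
        refine Finset.sum_congr rfl fun q _ => ?_
        rw [Finset.sum_comm]
        refine Finset.sum_congr rfl fun b _ => ?_
        rw [Finset.sum_comm]
        refine Finset.sum_congr rfl fun c _ => ?_
        rw [Finset.sum_mul]
    _ = ∑ q : Fin n → ZMod 2, ∑ b : Fin n → ZMod 2,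
          (2:ℂ)^n * (eps (sdot a.1 q) * ((ψ (b + q) * conj (ψ b)) *
            (conj (ψ ((a.2 + b) + q)) * ψ (a.2 + b)))) := by
        refine Finset.sum_congr rfl fun q _ => Finset.sum_congr rfl fun b _ => ?_
        have hcond : ∀ c : Fin n → ZMod 2, (a.2 + (b + c) = 0) ↔ (c = a.2 + b) := by
          intro c
          constructor
          · intro h
            have h2 : a.2 + (a.2 + (b + c)) = a.2 + 0 := by rw [h]
            rw [vadd_cancel, add_zero] at h2
            rw [← h2, add_comm b c, add_assoc, vadd_self, add_zero]
          · rintro rfl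
            rw [add_comm a.2 b, vadd_cancel, vadd_self]
        simp only [sum_eps, hcond]
        simp only [ite_mul, zero_mul]
        rw [Finset.sum_ite_eq' Finset.univ (a.2 + b)
          (fun c => (2:ℂ)^n * (eps (sdot a.1 q) * ((ψ (b + q) * conj (ψ b)) *
            (conj (ψ (c + q)) * ψ c))))]
        simp
    _ = (2:ℂ)^n * ∑ b : Fin n → ZMod 2, ∑ q : Fin n → ZMod 2,
          (eps (sdot a.1 q) * ((ψ (b + q) * conj (ψ b)) *
            (conj (ψ ((a.2 + b) + q)) * ψ (a.2 + b)))) := by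
        rw [Finset.sum_comm]
        simp only [← Finset.mul_sum]
    _ = (2:ℂ)^n * ∑ b : Fin n → ZMod 2, ∑ q : Fin n → ZMod 2,
          (eps (sdot a.1 b) * (ψ (b + a.2) * conj (ψ b))) *
            (eps (sdot a.1 q) * (conj (ψ (q + a.2)) * ψ q)) := by
        congr 1
        refine Finset.sum_congr rfl fun b _ => ?_
        refine (Fintype.sum_equiv (Equiv.addLeft b) _ _ fun q => ?_).symm
        simp only [Equiv.coe_addLeft]
        rw [show b + (b + q) = q from vadd_cancel b q,
          show (a.2 + b) + (b + q) = a.2 + q from by rw [add_assoc, vadd_cancel],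
          show sdot a.1 (b + q) = sdot a.1 b + sdot a.1 q from sdot_add_right _ _ _,
          eps_add, show b + a.2 = a.2 + b from add_comm _ _,
          show q + a.2 = a.2 + q from add_comm _ _]
        ring
    _ = 2^n * (Sfun ψ a * conj (Sfun ψ a)) := by
        rw [← Finset.sum_mul_sum]
        rw [hconjS, Sfun]

end AuxStmt10

end AuxStmt10
end

/-- For a pure `n`-qubit state `ψ`, the characteristic distribution
`p_ψ(a) = 2^{-n}|tr(ψ W_a)|²` is invariant under the symplectic Fourier
transform: `2^{-n} ∑_x (-1)^{[a,x]} p_ψ(x) = p_ψ(a)`. -/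
theorem stmt10 (n : ℕ) (ψ : (Fin n → ZMod 2) → ℂ) (hψ : dotc ψ ψ = 1)
    (a : (Fin n → ZMod 2) × (Fin n → ZMod 2)) :
    ((2 : ℝ) ^ n)⁻¹ * ∑ x : ((Fin n → ZMod 2) × (Fin n → ZMod 2)),
        (-1 : ℝ) ^ (symp a x).val * pdist 2 n ψ x =
      pdist 2 n ψ a := by
  have key := AuxStmt10.key ψ a
  simp only [Complex.mul_conj, AuxStmt10.eps] at key
  have keyR : ∑ x : ((Fin n → ZMod 2) × (Fin n → ZMod 2)),
      (-1:ℝ)^(symp a x).val * Complex.normSq (AuxStmt10.Sfun ψ x)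
      = 2^n * Complex.normSq (AuxStmt10.Sfun ψ a) := by
    exact_mod_cast key
  simp only [AuxStmt10.pdist_eq]
  calc ((2:ℝ)^n)⁻¹ * ∑ x : ((Fin n → ZMod 2) × (Fin n → ZMod 2)),
        (-1:ℝ)^(symp a x).val * (((2:ℝ)^n)⁻¹ * Complex.normSq (AuxStmt10.Sfun ψ x))
      = ((2:ℝ)^n)⁻¹ * (((2:ℝ)^n)⁻¹ * ∑ x : ((Fin n → ZMod 2) × (Fin n → ZMod 2)),
          (-1:ℝ)^(symp a x).val * Complex.normSq (AuxStmt10.Sfun ψ x)) := by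
        rw [Finset.mul_sum, Finset.mul_sum, Finset.mul_sum]
        exact Finset.sum_congr rfl fun x _ => by ring
    _ = ((2:ℝ)^n)⁻¹ * Complex.normSq (AuxStmt10.Sfun ψ a) := by
        rw [keyR, inv_mul_cancel_left₀ (pow_ne_zero n two_ne_zero)]
end

section
/- Let d be a prime, t ≥ 1, and for each stochastic Lagrangian subspace T ⊆ Z_d^{2t} let |T⟩ = Σ_{v ∈ T} |v⟩ ∈ (C^d)^{⊗2t}. If n ≥ t - 1, then the vectors |T⟩^{⊗n}, as T ranges over all stochastic Lagrangian subspaces, are linearly independent. -/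
open Finset

/-- `D = d` for `d` odd and `D = 2d` for `d` even. -/
def Dmod (d : ℕ) : ℕ := if d % 2 = 0 then 2 * d else d

/-- A stochastic Lagrangian subspace `T ⊆ Z_d^t ⊕ Z_d^t`: a `t`-dimensional
subspace which is totally isotropic for the quadratic form
`q(x,y) = x·x - y·y mod D` and contains the all-ones vector. -/
def IsStochasticLagrangian (d t : ℕ)
    (T : Submodule (ZMod d) ((Fin t → ZMod d) × (Fin t → ZMod d))) : Prop :=
  (∀ v ∈ T, ((∑ i, (v.1 i).val ^ 2 : ℕ) : ZMod (Dmod d)) =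
      ((∑ i, (v.2 i).val ^ 2 : ℕ) : ZMod (Dmod d))) ∧
  Module.finrank (ZMod d) T = t ∧
  ((fun _ => 1, fun _ => 1) : (Fin t → ZMod d) × (Fin t → ZMod d)) ∈ T

/-- The vector `|T⟩^{⊗n} = (∑_{v ∈ T} |v⟩)^{⊗n}`, with coordinates the
indicator that every block lies in `T`. -/
noncomputable def vecT (d t n : ℕ)
    (T : Submodule (ZMod d) ((Fin t → ZMod d) × (Fin t → ZMod d))) :
    (Fin n → ((Fin t → ZMod d) × (Fin t → ZMod d))) → ℂ :=
  fun a => ∏ j, (T : Set ((Fin t → ZMod d) × (Fin t → ZMod d))).indicator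
    (fun _ => (1 : ℂ)) (a j)

/-- Any stochastic Lagrangian subspace `T₀` is generated by the all-ones vector
together with `t - 1` further vectors, and is the unique stochastic Lagrangian
subspace containing those `t - 1` vectors. -/
lemma exists_gen (d t : ℕ) [Fact (Nat.Prime d)] (ht : 1 ≤ t)
    (T₀ : Submodule (ZMod d) ((Fin t → ZMod d) × (Fin t → ZMod d)))
    (hT₀ : IsStochasticLagrangian d t T₀) :
    ∃ v : Fin (t-1) → ((Fin t → ZMod d) × (Fin t → ZMod d)),
      (∀ i, v i ∈ T₀) ∧
      ∀ T : Submodule (ZMod d) ((Fin t → ZMod d) × (Fin t → ZMod d)),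
        IsStochasticLagrangian d t T → (∀ i, v i ∈ T) → T = T₀ := by
  classical
  set x₀ : (Fin t → ZMod d) × (Fin t → ZMod d) := (fun _ => 1, fun _ => 1) with hx₀def
  have hx₀T : x₀ ∈ T₀ := hT₀.2.2
  set x : T₀ := ⟨x₀, hx₀T⟩ with hxdef
  have hx : x ≠ 0 := by
    intro h
    have h2 := congrArg (fun y : T₀ => (y : (Fin t → ZMod d) × (Fin t → ZMod d)).1 ⟨0, ht⟩) h
    simp [hxdef, hx₀def] at h2
  have hli : LinearIndepOn (ZMod d) id ({x} : Set T₀) :=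
    (linearIndepOn_singleton_iff (R := ZMod d)).mpr hx
  set se := hli.extend (Set.subset_univ ({x} : Set T₀)) with hsedef
  have hxse : x ∈ se := hli.subset_extend _ rfl
  let b : Module.Basis se (ZMod d) T₀ := Module.Basis.extend hli
  haveI : Fintype se := Fintype.ofFinite se
  have hcard : Fintype.card se = t := by
    rw [← Module.finrank_eq_card_basis b, hT₀.2.1]
  have hcard_u : Fintype.card ↥(se \ {x} : Set T₀) = t - 1 := by
    rw [← Set.toFinset_card, Set.toFinset_diff, Set.toFinset_singleton,
      Finset.sdiff_singleton_eq_erase, Finset.card_erase_of_mem (by simpa using hxse),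
      Set.toFinset_card, hcard]
  let e : Fin (t-1) ≃ ↥(se \ {x} : Set T₀) := (Fintype.equivFinOfCardEq hcard_u).symm
  refine ⟨fun i => ((e i : T₀) : _), fun i => (e i : T₀).2, ?_⟩
  intro T hT hvT
  have hse : ∀ y : T₀, y ∈ se → (y : (Fin t → ZMod d) × (Fin t → ZMod d)) ∈ T := by
    intro y hy
    by_cases hyx : y = x
    · subst hyx; exact hT.2.2
    · have hyu : y ∈ (se \ {x} : Set T₀) := ⟨hy, hyx⟩
      have h3 := hvT (e.symm ⟨y, hyu⟩)
      simpa using h3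
  have hle : T₀ ≤ T := by
    intro z hz
    set z' : T₀ := ⟨z, hz⟩ with hz'def
    have hz'' : z' = ∑ i : se, b.repr z' i • b i := (b.sum_repr z').symm
    have hcoe : (z' : (Fin t → ZMod d) × (Fin t → ZMod d))
        = ∑ i : se, b.repr z' i • ((b i : T₀) : (Fin t → ZMod d) × (Fin t → ZMod d)) := by
      rw [hz'']
      push_cast
      simp
    have : z = (z' : (Fin t → ZMod d) × (Fin t → ZMod d)) := rfl
    rw [this, hcoe]
    refine Submodule.sum_mem _ (fun i _ => Submodule.smul_mem _ _ ?_)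
    have hbi : (b i : T₀) = (i : T₀) := Module.Basis.extend_apply_self hli i
    rw [hbi]
    exact hse (i : T₀) i.2
  exact (Submodule.eq_of_le_of_finrank_eq hle (by rw [hT₀.2.1, hT.2.1])).symm

/-- For prime `d` and `n ≥ t - 1`, the vectors `|T⟩^{⊗n}`, as `T` ranges over
the stochastic Lagrangian subspaces, are linearly independent. -/
theorem stmt12 (d t n : ℕ) [Fact d.Prime] (ht : 1 ≤ t) (hn : t - 1 ≤ n) :
    LinearIndependent ℂ
      (fun T : {T : Submodule (ZMod d) ((Fin t → ZMod d) × (Fin t → ZMod d)) //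
          IsStochasticLagrangian d t T} => vecT d t n T.1) := by
  classical
  rw [linearIndependent_iff']
  intro s g hsum T₀ hT₀s
  obtain ⟨v, hvmem, hvuniq⟩ := exists_gen d t ht T₀.1 T₀.2
  set a : Fin n → ((Fin t → ZMod d) × (Fin t → ZMod d)) :=
    fun j => if h : (j : ℕ) < t - 1 then v ⟨j, h⟩ else (fun _ => 1, fun _ => 1) with hadef
  have ha : ∀ T : {T : Submodule (ZMod d) ((Fin t → ZMod d) × (Fin t → ZMod d)) //
      IsStochasticLagrangian d t T}, vecT d t n T.1 a = if T = T₀ then 1 else 0 := by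
    intro T
    by_cases hTT : T = T₀
    · subst hTT
      simp only [if_pos rfl]
      unfold vecT
      refine Finset.prod_eq_one (fun j _ => ?_)
      refine Set.indicator_of_mem ?_ _
      by_cases h : (j : ℕ) < t - 1
      · simpa [hadef, h] using hvmem ⟨j, h⟩
      · simpa [hadef, h] using T.2.2.2
    · simp only [if_neg hTT]
      have hnot : ∃ j, a j ∉ (T.1 : Set _) := by
        by_contra hall
        push_neg at hall
        have : ∀ i : Fin (t-1), v i ∈ T.1 := by
          intro i
          have hi : (i : ℕ) < n := lt_of_lt_of_le i.2 hn
          have := hall ⟨i, hi⟩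
          simpa [hadef, i.2] using this
        exact hTT (Subtype.ext (hvuniq T.1 T.2 this))
      obtain ⟨j, hj⟩ := hnot
      unfold vecT
      exact Finset.prod_eq_zero (Finset.mem_univ j) (Set.indicator_of_notMem hj _)
  have h0 := congrFun hsum a
  simp only [Finset.sum_apply, Pi.smul_apply, Pi.zero_apply, smul_eq_mul] at h0
  rw [Finset.sum_congr rfl (fun T _ => by rw [ha T])] at h0
  simpa [Finset.sum_ite_eq', hT₀s] using h0
end

section
/- Let d be a prime coprime to t, let p ∈ Z_d^t have all entries ±1 with p·1_t = 0, and let π be a t×t permutation matrix with π p = ε p for ε ∈ {±1}. Then the matrix O = π - ε·2 t^{-1} p p^T (over Z_d) satisfies O^T O = I and O 1_t = 1_t. -/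
open Finset Matrix

/-- The permutation matrix of `π` over `ZMod d`: entries `δ_{i, π(j)}`. -/
def permMat (d t : ℕ) (π : Equiv.Perm (Fin t)) : Matrix (Fin t) (Fin t) (ZMod d) :=
  Matrix.of fun i j => if i = π j then 1 else 0

/-- Let `d` be a prime coprime to `t`, `p ∈ Z_d^t` with entries `±1` and
`p·1_t = 0`, and `π` a permutation matrix with `πp = εp`, `ε = ±1`. Then
`O = π - 2εt^{-1} p pᵀ` is a stochastic orthogonal matrix: `OᵀO = I` and
`O 1_t = 1_t`. -/
theorem stmt14 (d t : ℕ) [Fact d.Prime] (hcop : Nat.Coprime d t)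
    (p : Fin t → ZMod d) (hp : ∀ i, p i = 1 ∨ p i = -1)
    (hbal : ∑ i, p i = 0)
    (π : Equiv.Perm (Fin t)) (ε : ZMod d) (hε : ε = 1 ∨ ε = -1)
    (hπp : (permMat d t π).mulVec p = ε • p) :
    ((permMat d t π - (ε * 2 * (t : ZMod d)⁻¹) • Matrix.vecMulVec p p)ᵀ *
        (permMat d t π - (ε * 2 * (t : ZMod d)⁻¹) • Matrix.vecMulVec p p) = 1) ∧
    (permMat d t π - (ε * 2 * (t : ZMod d)⁻¹) • Matrix.vecMulVec p p).mulVec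
        (fun _ => 1) = fun _ => 1 := by
  set c : ZMod d := ε * 2 * (t : ZMod d)⁻¹ with hc
  have htu : IsUnit (t : ZMod d) := by
    rw [ZMod.isUnit_iff_coprime]; exact hcop.symm
  have hti : (t : ZMod d)⁻¹ * t = 1 := ZMod.inv_mul_of_unit _ htu
  have hε2 : ε * ε = 1 := by rcases hε with h | h <;> simp [h]
  have hsq : ∀ k, p k * p k = 1 := by
    intro k; rcases hp k with h | h <;> simp [h]
  have hsum : ∀ (a : Fin t) (f : Fin t → ZMod d),
      ∑ k, (if k = a then (1 : ZMod d) else 0) * f k = f a := by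
    intro a f
    simp [ite_mul]
  -- p (π.symm i) = ε * p i
  have hPp : ∀ i, p (π.symm i) = ε * p i := by
    intro i
    have h := congrFun hπp i
    simp only [permMat, Matrix.mulVec, dotProduct, Matrix.of_apply, Pi.smul_apply,
      smul_eq_mul] at h
    have : ∀ k, (i = π k) ↔ (k = π.symm i) := by
      intro k; constructor <;> intro h' <;> simp [h']
    simp_rw [this] at h
    rw [hsum (π.symm i) p] at h
    exact h
  have hPπ : ∀ i, p (π i) = ε * p i := by
    intro i
    have h := hPp (π i)
    simp at h
    -- h : p i = ε * p (π i)
    have := congrArg (ε * ·) h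
    simp only [← mul_assoc, hε2, one_mul] at this
    exact this.symm
  have hppt : ∑ k, p k * p k = (t : ZMod d) := by
    simp [hsq]
  constructor
  · ext i j
    simp only [Matrix.mul_apply, Matrix.transpose_apply, Matrix.sub_apply,
      Matrix.smul_apply, permMat, Matrix.of_apply, vecMulVec_apply, smul_eq_mul,
      Matrix.one_apply]
    have expand : ∀ k : Fin t,
        ((if k = π i then (1:ZMod d) else 0) - c * (p k * p i)) *
        ((if k = π j then (1:ZMod d) else 0) - c * (p k * p j)) =
        (if k = π i then (1:ZMod d) else 0) * (if k = π j then (1:ZMod d) else 0)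
        - (if k = π i then (1:ZMod d) else 0) * (c * p k * p j)
        - (if k = π j then (1:ZMod d) else 0) * (c * p k * p i)
        + (c * c * (p i * p j)) * (p k * p k) := by
      intro k; ring
    rw [Finset.sum_congr rfl fun k _ => expand k]
    rw [Finset.sum_add_distrib, Finset.sum_sub_distrib, Finset.sum_sub_distrib,
      hsum, hsum, hsum, ← Finset.mul_sum, hppt]
    have h1 : (if π i = π j then (1:ZMod d) else 0) = if i = j then 1 else 0 := by
      simp
    rw [h1, hPπ, hPπ]
    have hcoef : c * c * (p i * p j) * (t:ZMod d)
        - (c * (ε * p i) * p j + c * (ε * p j) * p i) = 0 := by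
      rw [hc]
      have h4 : (ε * 2 * (t : ZMod d)⁻¹) * (ε * 2 * (t : ZMod d)⁻¹) * (p i * p j) * t
          = (4 : ZMod d) * (t : ZMod d)⁻¹ * (p i * p j) := by
        have : (ε * 2 * (t : ZMod d)⁻¹) * (ε * 2 * (t : ZMod d)⁻¹) * (p i * p j) * t
            = (ε * ε) * 4 * ((t : ZMod d)⁻¹ * t) * (t : ZMod d)⁻¹ * (p i * p j) := by
          ring
        rw [this, hε2, hti]; ring
      have h5 : (ε * 2 * (t : ZMod d)⁻¹) * (ε * p i) * p j
          + (ε * 2 * (t : ZMod d)⁻¹) * (ε * p j) * p i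
          = (4 : ZMod d) * (t : ZMod d)⁻¹ * (p i * p j) := by
        have : (ε * 2 * (t : ZMod d)⁻¹) * (ε * p i) * p j
            + (ε * 2 * (t : ZMod d)⁻¹) * (ε * p j) * p i
            = (ε * ε) * (4 * (t : ZMod d)⁻¹ * (p i * p j)) := by ring
        rw [this, hε2]; ring
      rw [h4, h5]; ring
    linear_combination hcoef
  · funext i
    simp only [Matrix.mulVec, dotProduct, Matrix.sub_apply, Matrix.smul_apply,
      permMat, Matrix.of_apply, vecMulVec_apply, smul_eq_mul, mul_one,
      Finset.sum_sub_distrib]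
    have : ∀ k, (i = π k) ↔ (k = π.symm i) := by
      intro k; constructor <;> intro h' <;> simp [h']
    simp_rw [this]
    simp only [← mul_assoc]
    rw [← Finset.mul_sum, hbal, mul_zero]
    simp
end
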